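/- arXiv:1902.10324 — 13 statements merged into one kernel-verified Lean document; each statement's English description precedes it below -/
import Mathlib

section
/- Let T be a set, ψ : T → ℂ a function, and φ : T → T a map. The weighted composition operator ψC_φ, given by (ψC_φ f)(v) = ψ(v) f(φ(v)), is an isometry on the space L^∞ of bounded functions on T (with sup norm) if and only if φ is surjective and for every w ∈ T, sup_{v ∈ φ⁻¹(w)} |ψ(v)| = 1. -/
/-- The weighted composition operator `ψC_φ f = ψ · (f ∘ φ)` is an isometry
on the space of bounded functions on `T` (with sup norm) if and only if `φ` is surjective
and `sup_{v ∈ φ⁻¹(w)} |ψ(v)| = 1` for every `w ∈ T`. -/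
theorem stmt2 {T : Type*} (ψ : T → ℂ) (φ : T → T) :
    (∀ f : T → ℂ, BddAbove (Set.range fun v => ‖f v‖) →
      BddAbove (Set.range fun v => ‖ψ v * f (φ v)‖) ∧
        (⨆ v, ‖ψ v * f (φ v)‖) = ⨆ v, ‖f v‖) ↔
      (Function.Surjective φ ∧ ∀ w : T, (⨆ v ∈ φ ⁻¹' {w}, ‖ψ v‖) = 1) := by
  classical
  constructor
  · intro h
    have key : ∀ w : T, (⨆ v, ‖ψ v * (if φ v = w then (1 : ℂ) else 0)‖) = 1 := by
      intro w
      haveI : Nonempty T := ⟨w⟩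
      set f : T → ℂ := fun v => if v = w then 1 else 0 with hf
      have hbdd : BddAbove (Set.range fun v => ‖f v‖) := by
        refine ⟨1, ?_⟩
        rintro x ⟨v, rfl⟩
        simp only [hf]
        split_ifs <;> simp
      obtain ⟨_, heq⟩ := h f hbdd
      have h1 : (⨆ v, ‖f v‖) = 1 := by
        apply le_antisymm
        · apply ciSup_le
          intro v
          simp only [hf]
          split_ifs <;> simp
        · have := le_ciSup hbdd w
          simpa [hf] using this
      calc (⨆ v, ‖ψ v * (if φ v = w then (1 : ℂ) else 0)‖)
          = ⨆ v, ‖ψ v * f (φ v)‖ := by simp only [hf]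
        _ = ⨆ v, ‖f v‖ := heq
        _ = 1 := h1
    constructor
    · intro w
      by_contra hw
      push_neg at hw
      have := key w
      have hz : ∀ v, ‖ψ v * (if φ v = w then (1 : ℂ) else 0)‖ = 0 := by
        intro v
        rw [if_neg (hw v)]
        simp
      rw [funext hz] at this
      simp at this
    · intro w
      have hk := key w
      have hcong : ∀ v : T, ‖ψ v * (if φ v = w then (1 : ℂ) else 0)‖
          = ⨆ _ : v ∈ φ ⁻¹' {w}, ‖ψ v‖ := by
        intro v
        by_cases hv : φ v = w
        · rw [if_pos hv, ciSup_pos (show v ∈ φ ⁻¹' {w} from hv)]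
          simp
        · rw [if_neg hv]
          haveI : IsEmpty (v ∈ φ ⁻¹' {w}) := ⟨fun hm => hv hm⟩
          rw [Real.iSup_of_isEmpty]
          simp
      calc (⨆ v ∈ φ ⁻¹' {w}, ‖ψ v‖)
          = ⨆ v, ‖ψ v * (if φ v = w then (1 : ℂ) else 0)‖ := by
            exact (iSup_congr hcong).symm
        _ = 1 := hk
  · rintro ⟨hsurj, hsup⟩ f hbdd
    cases isEmpty_or_nonempty T with
    | inl hT =>
      constructor
      · simp [Set.range_eq_empty]
      · rw [Real.iSup_of_isEmpty, Real.iSup_of_isEmpty]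
    | inr hT =>
      -- every ‖ψ v‖ ≤ 1
      have hψle : ∀ v, ‖ψ v‖ ≤ 1 := by
        intro v
        have h1 := hsup (φ v)
        set g : T → ℝ := fun u => ⨆ _ : u ∈ φ ⁻¹' {φ v}, ‖ψ u‖ with hg
        have hb : BddAbove (Set.range g) := by
          by_contra hb
          rw [show (⨆ u ∈ φ ⁻¹' {φ v}, ‖ψ u‖) = ⨆ u, g u from rfl,
            Real.iSup_of_not_bddAbove hb] at h1
          norm_num at h1
        have hv : g v = ‖ψ v‖ := ciSup_pos (show v ∈ φ ⁻¹' {φ v} from rfl)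
        calc ‖ψ v‖ = g v := hv.symm
          _ ≤ ⨆ u, g u := le_ciSup hb v
          _ = 1 := h1
      set M := ⨆ v, ‖f v‖ with hM
      have hfM : ∀ v, ‖f v‖ ≤ M := fun v => le_ciSup hbdd v
      have hub : ∀ v, ‖ψ v * f (φ v)‖ ≤ M := by
        intro v
        rw [norm_mul]
        calc ‖ψ v‖ * ‖f (φ v)‖ ≤ 1 * ‖f (φ v)‖ :=
              mul_le_mul_of_nonneg_right (hψle v) (norm_nonneg _)
          _ = ‖f (φ v)‖ := one_mul _
          _ ≤ M := hfM _
      have hb2 : BddAbove (Set.range fun v => ‖ψ v * f (φ v)‖) := by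
        refine ⟨M, ?_⟩
        rintro x ⟨v, rfl⟩
        exact hub v
      refine ⟨hb2, ?_⟩
      set S := ⨆ v, ‖ψ v * f (φ v)‖ with hS
      have hSM : S ≤ M := ciSup_le hub
      have hS0 : 0 ≤ S := le_trans (norm_nonneg _) (le_ciSup hb2 (Classical.arbitrary T))
      have hMS : M ≤ S := by
        apply ciSup_le
        intro w
        by_contra hcon
        push_neg at hcon
        have hfw : 0 < ‖f w‖ := lt_of_le_of_lt hS0 hcon
        set c := S / ‖f w‖ with hc
        have hc1 : c < 1 := (div_lt_one hfw).mpr hcon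
        have hc0 : 0 ≤ c := div_nonneg hS0 (norm_nonneg _)
        have hlt : c < ⨆ u, ⨆ _ : u ∈ φ ⁻¹' {w}, ‖ψ u‖ := by
          rw [hsup w]; exact hc1
        obtain ⟨u, hu⟩ := exists_lt_of_lt_ciSup hlt
        have hum : φ u = w := by
          by_contra hum
          haveI : IsEmpty (u ∈ φ ⁻¹' {w}) := ⟨fun hm => hum hm⟩
          rw [Real.iSup_of_isEmpty] at hu
          exact absurd hu (not_lt.mpr hc0)
        rw [ciSup_pos (show u ∈ φ ⁻¹' {w} from hum)] at hu
        have : S < ‖ψ u * f (φ u)‖ := by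
          rw [hum, norm_mul]
          calc S = c * ‖f w‖ := by rw [hc, div_mul_cancel₀ _ (ne_of_gt hfw)]
            _ < ‖ψ u‖ * ‖f w‖ := by
                exact mul_lt_mul_of_pos_right hu hfw
        exact absurd (le_ciSup hb2 u) (not_le.mpr this)
      exact le_antisymm hSM hMS
end

section
/- Let T be a set, ψ : T → ℂ bounded, and φ : T → T a surjective map. Then the injectivity modulus of the weighted composition operator ψC_φ on L^∞, defined by j(ψC_φ) = inf{‖ψC_φ f‖_∞ : ‖f‖_∞ = 1}, equals inf_{w∈T} ( sup_{v∈φ⁻¹(w)} |ψ(v)| ). -/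
/-- For `ψ : T → ℂ` bounded and `φ : T → T` surjective, the injectivity
modulus `j(ψC_φ) = inf {‖ψC_φ f‖_∞ : ‖f‖_∞ = 1}` of the weighted composition operator on
the space of bounded functions equals `inf_{w ∈ T} sup_{v ∈ φ⁻¹(w)} |ψ(v)|`. -/
theorem stmt3 {T : Type*} (ψ : T → ℂ) (hψ : BddAbove (Set.range fun v => ‖ψ v‖))
    (φ : T → T) (hφ : Function.Surjective φ) :
    sInf {x : ℝ | ∃ f : T → ℂ, BddAbove (Set.range fun v => ‖f v‖) ∧
        (⨆ v, ‖f v‖) = 1 ∧ x = ⨆ v, ‖ψ v * f (φ v)‖} =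
      ⨅ w : T, ⨆ v ∈ φ ⁻¹' {w}, ‖ψ v‖ := by
  by_cases hT : Nonempty T
  swap
  · have hE : IsEmpty T := not_nonempty_iff.mp hT
    have hS : {x : ℝ | ∃ f : T → ℂ, BddAbove (Set.range fun v => ‖f v‖) ∧
        (⨆ v, ‖f v‖) = 1 ∧ x = ⨆ v, ‖ψ v * f (φ v)‖} = ∅ := by
      ext x
      simp only [Set.mem_setOf_eq, Set.mem_empty_iff_false, iff_false, not_exists]
      rintro f ⟨-, h1, -⟩
      rw [Real.iSup_of_isEmpty] at h1
      norm_num at h1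
    rw [hS, Real.sInf_empty, Real.iInf_of_isEmpty]
  · haveI := hT
    classical
    obtain ⟨v₀⟩ := id hT
    obtain ⟨Cψ, hCψ'⟩ := hψ
    have hCψ : ∀ v, ‖ψ v‖ ≤ Cψ := fun v => hCψ' ⟨v, rfl⟩
    have hCψ0 : 0 ≤ Cψ := le_trans (norm_nonneg _) (hCψ v₀)
    set M : T → ℝ := fun w => ⨆ v ∈ φ ⁻¹' {w}, ‖ψ v‖ with hMdef
    have hterm : ∀ w v, (⨆ _ : v ∈ φ ⁻¹' {w}, ‖ψ v‖) = if φ v = w then ‖ψ v‖ else 0 := by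
      intro w v
      by_cases h : φ v = w
      · rw [if_pos h]; exact ciSup_pos h
      · rw [if_neg h]
        haveI : IsEmpty (v ∈ φ ⁻¹' {w}) := ⟨h⟩
        exact Real.iSup_of_isEmpty _
    have hA : ∀ w a, 0 ≤ a → (∀ v, φ v = w → ‖ψ v‖ ≤ a) → M w ≤ a := by
      intro w a ha h
      apply ciSup_le
      intro v
      rw [hterm w v]
      by_cases hv : φ v = w
      · rw [if_pos hv]; exact h v hv
      · rw [if_neg hv]; exact ha
    have hB : ∀ w v, φ v = w → ‖ψ v‖ ≤ M w := by
      intro w v hv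
      have hbdd : BddAbove (Set.range fun v => ⨆ _ : v ∈ φ ⁻¹' {w}, ‖ψ v‖) := by
        refine ⟨Cψ, ?_⟩
        rintro x ⟨u, rfl⟩
        dsimp only
        rw [hterm w u]
        split
        · exact hCψ u
        · exact hCψ0
      have h := le_ciSup hbdd v
      rwa [hterm w v, if_pos hv] at h
    have hM0 : ∀ w, 0 ≤ M w := by
      intro w
      obtain ⟨v, hv⟩ := hφ w
      exact le_trans (norm_nonneg _) (hB w v hv)
    have hmem : ∀ w, M w ∈ {x : ℝ | ∃ f : T → ℂ, BddAbove (Set.range fun v => ‖f v‖) ∧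
        (⨆ v, ‖f v‖) = 1 ∧ x = ⨆ v, ‖ψ v * f (φ v)‖} := by
      intro w
      refine ⟨fun v => if v = w then 1 else 0, ?_, ?_, ?_⟩
      · refine ⟨1, ?_⟩
        rintro x ⟨u, rfl⟩
        dsimp only
        split <;> simp
      · apply le_antisymm
        · apply ciSup_le
          intro v
          dsimp only
          split <;> simp
        · have h1 : (1:ℝ) = ‖(if w = w then (1:ℂ) else 0)‖ := by simp
          rw [h1]
          apply le_ciSup (f := fun v => ‖if v = w then (1:ℂ) else 0‖)
          refine ⟨1, ?_⟩
          rintro x ⟨u, rfl⟩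
          dsimp only
          split <;> simp
      · refine Eq.symm (iSup_congr fun v => ?_)
        rw [hterm w v]
        dsimp only
        by_cases hv : φ v = w
        · rw [if_pos hv, if_pos hv, mul_one]
        · rw [if_neg hv, if_neg hv, mul_zero, norm_zero]
    have hSne : Set.Nonempty {x : ℝ | ∃ f : T → ℂ, BddAbove (Set.range fun v => ‖f v‖) ∧
        (⨆ v, ‖f v‖) = 1 ∧ x = ⨆ v, ‖ψ v * f (φ v)‖} := ⟨M v₀, hmem v₀⟩
    have hSbdd : BddBelow {x : ℝ | ∃ f : T → ℂ, BddAbove (Set.range fun v => ‖f v‖) ∧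
        (⨆ v, ‖f v‖) = 1 ∧ x = ⨆ v, ‖ψ v * f (φ v)‖} := by
      refine ⟨0, ?_⟩
      rintro x ⟨f, hfb, hf1, rfl⟩
      obtain ⟨Cf, hCf'⟩ := id hfb
      have hCf : ∀ v, ‖f v‖ ≤ Cf := fun v => hCf' ⟨v, rfl⟩
      have hbdd : BddAbove (Set.range fun v => ‖ψ v * f (φ v)‖) := by
        refine ⟨Cψ * Cf, ?_⟩
        rintro x ⟨u, rfl⟩
        dsimp only
        rw [norm_mul]
        exact mul_le_mul (hCψ u) (hCf _) (norm_nonneg _) hCψ0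
      exact le_trans (norm_nonneg _) (le_ciSup hbdd v₀)
    apply le_antisymm
    · exact le_ciInf fun w => csInf_le hSbdd (hmem w)
    · apply le_csInf hSne
      rintro x ⟨f, hfb, hf1, rfl⟩
      obtain ⟨Cf, hCf'⟩ := id hfb
      have hCf : ∀ v, ‖f v‖ ≤ Cf := fun v => hCf' ⟨v, rfl⟩
      have hbdd : BddAbove (Set.range fun v => ‖ψ v * f (φ v)‖) := by
        refine ⟨Cψ * Cf, ?_⟩
        rintro x ⟨u, rfl⟩
        dsimp only
        rw [norm_mul]
        exact mul_le_mul (hCψ u) (hCf _) (norm_nonneg _) hCψ0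
      set x := ⨆ v, ‖ψ v * f (φ v)‖ with hxdef
      have hx0 : 0 ≤ x := le_trans (norm_nonneg _) (le_ciSup hbdd v₀)
      apply le_of_forall_pos_le_add
      intro δ hδ
      have hε : 0 < δ / (Cψ + 1) := by positivity
      obtain ⟨w, hw⟩ : ∃ w, 1 - δ / (Cψ + 1) < ‖f w‖ := by
        apply exists_lt_of_lt_ciSup
        rw [hf1]; linarith
      have hfw1 : ‖f w‖ ≤ 1 := by
        have h := le_ciSup hfb w
        rwa [hf1] at h
      have h1 : (⨅ w', M w') ≤ M w :=
        ciInf_le ⟨0, by rintro y ⟨u, rfl⟩; exact hM0 u⟩ w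
      refine h1.trans (hA w (x + δ) (by linarith) ?_)
      intro v hv
      have e1 : ‖ψ v‖ * ‖f w‖ ≤ x := by
        have h := le_ciSup hbdd v
        rwa [norm_mul, hv] at h
      have e2 : ‖ψ v‖ * (1 - ‖f w‖) ≤ Cψ * (δ / (Cψ + 1)) :=
        mul_le_mul (hCψ v) (by linarith) (by linarith) hCψ0
      have e3 : Cψ * (δ / (Cψ + 1)) ≤ δ := by
        rw [← mul_div_assoc, div_le_iff₀ (by linarith)]
        nlinarith
      nlinarith [e1, e2, e3]
end

section
/- Let T be a set, ψ : T → ℂ bounded, and φ : T → T a map which is not injective. Then the weighted composition operator ψC_φ on the space L^∞ of bounded functions on T is not surjective onto L^∞ (equivalently, its surjectivity modulus is zero). -/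
/-- For `ψ : T → ℂ` bounded and `φ : T → T` not injective, the weighted
composition operator `ψC_φ` is not surjective on the space of bounded functions. -/
theorem stmt5 {T : Type*} (ψ : T → ℂ) (hψ : BddAbove (Set.range fun v => ‖ψ v‖))
    (φ : T → T) (hφ : ¬ Function.Injective φ) :
    ¬ ∀ g : T → ℂ, BddAbove (Set.range fun v => ‖g v‖) →
        ∃ f : T → ℂ, BddAbove (Set.range fun v => ‖f v‖) ∧ ∀ v, ψ v * f (φ v) = g v := by
  simp only [Function.Injective, not_forall] at hφ
  obtain ⟨a, b, hab, hne⟩ := hφ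
  intro H
  classical
  -- an indicator function is bounded
  have hbd : ∀ c : T, BddAbove (Set.range fun v => ‖(fun v => if v = c then (1:ℂ) else 0) v‖) := by
    intro c
    refine ⟨1, ?_⟩
    rintro x ⟨v, rfl⟩
    by_cases h : v = c <;> simp [h]
  by_cases hb : ψ b = 0
  · obtain ⟨f, _, hf⟩ := H (fun v => if v = b then (1:ℂ) else 0) (hbd b)
    have := hf b
    simp [hb] at this
  · obtain ⟨f, _, hf⟩ := H (fun v => if v = a then (1:ℂ) else 0) (hbd a)
    have h1 := hf a
    have h2 := hf b
    simp [hne, Ne.symm hne] at h1 h2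
    rw [← hab] at h2
    rcases h2 with h2 | h2
    · exact hb h2
    · rw [h2, mul_zero] at h1
      exact one_ne_zero h1.symm
end

section
/- Let T be a set, ψ : T → ℂ bounded with |ψ(v)| ≥ M > 0 for some constant M and all v, and φ : T → T an injective map. Then for every g ∈ L^∞ with ‖g‖_∞ ≤ M there exists f ∈ L^∞ with ‖f‖_∞ ≤ 1 and ψ(v) f(φ(v)) = g(v) for all v ∈ T. Consequently the surjectivity modulus of ψC_φ on L^∞ satisfies k(ψC_φ) ≥ inf_{v∈T} |ψ(v)|. -/
lemma stmt6_key {T : Type*} (ψ : T → ℂ) (M : ℝ) (hM : 0 < M) (hlb : ∀ v, M ≤ ‖ψ v‖)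
    (φ : T → T) (hφ : Function.Injective φ) :
    ∀ g : T → ℂ, BddAbove (Set.range fun v => ‖g v‖) → (⨆ v, ‖g v‖) ≤ M →
      ∃ f : T → ℂ, BddAbove (Set.range fun v => ‖f v‖) ∧ (⨆ v, ‖f v‖) ≤ 1 ∧
        ∀ v, ψ v * f (φ v) = g v := by
  classical
  intro g hg hgM
  set f : T → ℂ := fun w => if h : ∃ v, φ v = w then g h.choose / ψ h.choose else 0 with hf
  have hb : ∀ w, ‖f w‖ ≤ 1 := by
    intro w
    rw [hf]
    dsimp only
    split_ifs with h
    · rw [norm_div]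
      have h1 : ‖g h.choose‖ ≤ M := (le_ciSup hg h.choose).trans hgM
      have h2 : M ≤ ‖ψ h.choose‖ := hlb _
      rw [div_le_one (hM.trans_le h2)]
      exact h1.trans h2
    · simp
  refine ⟨f, ⟨1, ?_⟩, Real.iSup_le hb zero_le_one, ?_⟩
  · rintro x ⟨w, rfl⟩; exact hb w
  · intro v
    have h : ∃ u, φ u = φ v := ⟨v, rfl⟩
    have hv : h.choose = v := hφ h.choose_spec
    have hne : ψ v ≠ 0 := by
      intro h0
      have := hlb v
      rw [h0, norm_zero] at this
      linarith
    rw [hf]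
    dsimp only
    rw [dif_pos h, hv]
    field_simp

/-- If `|ψ| ≥ M > 0` on `T`, `ψ` is bounded, and `φ : T → T` is injective,
then every `g` with `‖g‖_∞ ≤ M` is of the form `ψ · (f ∘ φ)` with `‖f‖_∞ ≤ 1`;
consequently the surjectivity modulus of `ψC_φ` on the bounded functions is at least
`inf_v |ψ(v)|`. -/
theorem stmt6 {T : Type*} (ψ : T → ℂ) (hψ : BddAbove (Set.range fun v => ‖ψ v‖))
    (M : ℝ) (hM : 0 < M) (hlb : ∀ v, M ≤ ‖ψ v‖)
    (φ : T → T) (hφ : Function.Injective φ) :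
    (∀ g : T → ℂ, BddAbove (Set.range fun v => ‖g v‖) → (⨆ v, ‖g v‖) ≤ M →
        ∃ f : T → ℂ, BddAbove (Set.range fun v => ‖f v‖) ∧ (⨆ v, ‖f v‖) ≤ 1 ∧
          ∀ v, ψ v * f (φ v) = g v) ∧
      (⨅ v, ‖ψ v‖) ≤ sSup {r : ℝ | 0 ≤ r ∧ ∀ g : T → ℂ,
          BddAbove (Set.range fun v => ‖g v‖) → (⨆ v, ‖g v‖) ≤ r →
          ∃ f : T → ℂ, BddAbove (Set.range fun v => ‖f v‖) ∧ (⨆ v, ‖f v‖) ≤ 1 ∧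
            ∀ v, ψ v * f (φ v) = g v} := by
  refine ⟨stmt6_key ψ M hM hlb φ hφ, ?_⟩
  by_cases hT : Nonempty T
  · set m : ℝ := ⨅ v, ‖ψ v‖ with hm
    have hMm : M ≤ m := le_ciInf hlb
    have hbb : BddBelow (Set.range fun v => ‖ψ v‖) := by
      refine ⟨0, ?_⟩; rintro x ⟨v, rfl⟩; exact norm_nonneg _
    have hmlb : ∀ v, m ≤ ‖ψ v‖ := fun v => ciInf_le hbb v
    have hmS : m ∈ {r : ℝ | 0 ≤ r ∧ ∀ g : T → ℂ,
        BddAbove (Set.range fun v => ‖g v‖) → (⨆ v, ‖g v‖) ≤ r →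
        ∃ f : T → ℂ, BddAbove (Set.range fun v => ‖f v‖) ∧ (⨆ v, ‖f v‖) ≤ 1 ∧
          ∀ v, ψ v * f (φ v) = g v} :=
      ⟨(hM.trans_le hMm).le, stmt6_key ψ m (hM.trans_le hMm) hmlb φ hφ⟩
    refine le_csSup ⟨⨆ v, ‖ψ v‖, ?_⟩ hmS
    rintro r ⟨hr0, hrP⟩
    obtain ⟨v0⟩ := hT
    have hgbdd : BddAbove (Set.range fun v : T => ‖(fun _ : T => (r : ℂ)) v‖) := by
      refine ⟨r, ?_⟩; rintro x ⟨v, rfl⟩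
      simp [Complex.norm_real, abs_of_nonneg hr0]
    have hgsup : (⨆ v : T, ‖(fun _ : T => (r : ℂ)) v‖) ≤ r := by
      refine Real.iSup_le (fun v => ?_) hr0
      simp [Complex.norm_real, abs_of_nonneg hr0]
    obtain ⟨f, hfb, hf1, hfE⟩ := hrP (fun _ => (r : ℂ)) hgbdd hgsup
    have := hfE v0
    have hr : r = ‖ψ v0 * f (φ v0)‖ := by
      rw [this]; simp [Complex.norm_real, abs_of_nonneg hr0]
    rw [hr, norm_mul]
    calc ‖ψ v0‖ * ‖f (φ v0)‖ ≤ ‖ψ v0‖ * 1 := by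
          refine mul_le_mul_of_nonneg_left ?_ (norm_nonneg _)
          exact (le_ciSup hfb (φ v0)).trans hf1
      _ = ‖ψ v0‖ := mul_one _
      _ ≤ ⨆ v, ‖ψ v‖ := le_ciSup hψ v0
  · have : IsEmpty T := not_nonempty_iff.mp hT
    rw [Real.iInf_of_isEmpty]
    exact Real.sSup_nonneg (fun x hx => hx.1)
end

section
/- Let T be a set, ψ : T → ℂ bounded, and φ : T → T injective. Then the surjectivity modulus of the weighted composition operator ψC_φ on L^∞ equals inf_{v∈T} |ψ(v)|. -/
/-- For `ψ : T → ℂ` bounded and `φ : T → T` injective, the surjectivity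
modulus `k(ψC_φ) = sup {r ≥ 0 : ψC_φ(unit ball) ⊇ r·(unit ball)}` of the weighted
composition operator on the bounded functions equals `inf_v |ψ(v)|`. -/
theorem stmt7 {T : Type*} (ψ : T → ℂ) (hψ : BddAbove (Set.range fun v => ‖ψ v‖))
    (φ : T → T) (hφ : Function.Injective φ) :
    sSup {r : ℝ | 0 ≤ r ∧ ∀ g : T → ℂ,
        BddAbove (Set.range fun v => ‖g v‖) → (⨆ v, ‖g v‖) ≤ r →
        ∃ f : T → ℂ, BddAbove (Set.range fun v => ‖f v‖) ∧ (⨆ v, ‖f v‖) ≤ 1 ∧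
          ∀ v, ψ v * f (φ v) = g v} = ⨅ v, ‖ψ v‖ := by
  classical
  by_cases hT : Nonempty T
  · set m := ⨅ v, ‖ψ v‖ with hmdef
    have hm0 : 0 ≤ m := le_ciInf fun v => norm_nonneg _
    have hbb : BddBelow (Set.range fun v => ‖ψ v‖) :=
      ⟨0, by rintro x ⟨v, rfl⟩; exact norm_nonneg _⟩
    -- membership of m in the set
    have hmS : m ∈ {r : ℝ | 0 ≤ r ∧ ∀ g : T → ℂ,
        BddAbove (Set.range fun v => ‖g v‖) → (⨆ v, ‖g v‖) ≤ r →
        ∃ f : T → ℂ, BddAbove (Set.range fun v => ‖f v‖) ∧ (⨆ v, ‖f v‖) ≤ 1 ∧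
          ∀ v, ψ v * f (φ v) = g v} := by
      refine ⟨hm0, fun g hgb hgs => ?_⟩
      have hgv : ∀ v, ‖g v‖ ≤ ‖ψ v‖ := fun v =>
        le_trans (le_trans (le_ciSup hgb v) hgs) (ciInf_le hbb v)
      have key : ∀ v, ‖g v / ψ v‖ ≤ 1 := by
        intro v
        by_cases hz : ψ v = 0
        · have : g v = 0 := by
            have := hgv v
            rw [hz] at this
            exact norm_le_zero_iff.mp (by simpa using this)
          simp [this]
        · rw [norm_div]
          exact div_le_one_of_le₀ (hgv v) (norm_nonneg _)
      refine ⟨Function.extend φ (fun v => g v / ψ v) 0, ?_, ?_, ?_⟩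
      · refine ⟨1, ?_⟩
        rintro x ⟨w, rfl⟩
        by_cases h : ∃ v, φ v = w
        · obtain ⟨v, rfl⟩ := h
          simp only [hφ.extend_apply]
          exact key v
        · simp only [Function.extend_apply' _ _ _ h]
          simp
      · refine ciSup_le fun w => ?_
        by_cases h : ∃ v, φ v = w
        · obtain ⟨v, rfl⟩ := h
          simp only [hφ.extend_apply]
          exact key v
        · simp only [Function.extend_apply' _ _ _ h]
          simp
      · intro v
        rw [hφ.extend_apply]
        by_cases hz : ψ v = 0
        · have : g v = 0 := by
            have := hgv v
            rw [hz] at this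
            exact norm_le_zero_iff.mp (by simpa using this)
          simp [hz, this]
        · field_simp
    -- every element of the set is ≤ m
    have hub : ∀ r ∈ {r : ℝ | 0 ≤ r ∧ ∀ g : T → ℂ,
        BddAbove (Set.range fun v => ‖g v‖) → (⨆ v, ‖g v‖) ≤ r →
        ∃ f : T → ℂ, BddAbove (Set.range fun v => ‖f v‖) ∧ (⨆ v, ‖f v‖) ≤ 1 ∧
          ∀ v, ψ v * f (φ v) = g v}, r ≤ m := by
      rintro r ⟨hr0, hr⟩
      refine le_ciInf fun v0 => ?_
      set g : T → ℂ := fun v => if v = v0 then (r : ℂ) else 0 with hg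
      have hgb : BddAbove (Set.range fun v => ‖g v‖) := by
        refine ⟨r, ?_⟩
        rintro x ⟨v, rfl⟩
        by_cases h : v = v0 <;> simp [hg, h, abs_of_nonneg hr0, hr0]
      have hgs : (⨆ v, ‖g v‖) ≤ r := by
        refine ciSup_le fun v => ?_
        by_cases h : v = v0 <;> simp [hg, h, abs_of_nonneg hr0, hr0]
      obtain ⟨f, hfb, hfs, hfe⟩ := hr g hgb hgs
      have h1 : ‖ψ v0 * f (φ v0)‖ = r := by
        rw [hfe v0]; simp [hg, abs_of_nonneg hr0]
      have h2 : ‖f (φ v0)‖ ≤ 1 := le_trans (le_ciSup hfb _) hfs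
      calc r = ‖ψ v0‖ * ‖f (φ v0)‖ := by rw [← norm_mul, h1]
        _ ≤ ‖ψ v0‖ * 1 := by
            exact mul_le_mul_of_nonneg_left h2 (norm_nonneg _)
        _ = ‖ψ v0‖ := mul_one _
    exact le_antisymm (csSup_le ⟨m, hmS⟩ hub) (le_csSup ⟨m, hub⟩ hmS)
  · rw [not_nonempty_iff] at hT
    have h1 : (⨅ v, ‖ψ v‖) = 0 := Real.iInf_of_isEmpty _
    rw [h1]
    have hS : ∀ r : ℝ, 0 ≤ r → r ∈ {r : ℝ | 0 ≤ r ∧ ∀ g : T → ℂ,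
        BddAbove (Set.range fun v => ‖g v‖) → (⨆ v, ‖g v‖) ≤ r →
        ∃ f : T → ℂ, BddAbove (Set.range fun v => ‖f v‖) ∧ (⨆ v, ‖f v‖) ≤ 1 ∧
          ∀ v, ψ v * f (φ v) = g v} := by
      intro r hr
      refine ⟨hr, fun g hgb hgs => ⟨0, ⟨0, ?_⟩, ?_, fun v => (hT.false v).elim⟩⟩
      · rintro x ⟨v, rfl⟩
        exact (hT.false v).elim
      · rw [Real.iSup_of_isEmpty]; norm_num
    have hnb : ¬ BddAbove {r : ℝ | 0 ≤ r ∧ ∀ g : T → ℂ,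
        BddAbove (Set.range fun v => ‖g v‖) → (⨆ v, ‖g v‖) ≤ r →
        ∃ f : T → ℂ, BddAbove (Set.range fun v => ‖f v‖) ∧ (⨆ v, ‖f v‖) ≤ 1 ∧
          ∀ v, ψ v * f (φ v) = g v} := by
      rintro ⟨b, hb⟩
      have h1 := hb (hS (max b 0 + 1) (by positivity))
      have h2 : b ≤ max b 0 := le_max_left _ _
      linarith
    exact Real.sSup_of_not_bddAbove hnb
end

section
/- Let T be an infinite rooted tree without terminal vertices, ψ : T → ℂ, and φ : T → T. The weighted composition operator ψC_φ, (ψC_φ f)(v) = ψ(v) f(φ(v)), is bounded from the Lipschitz space 𝓛 to L^∞ if and only if ψ is bounded and sup_{v∈T} |ψ(v)| · |φ(v)| < ∞. -/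
open scoped Classical

/-- An infinite rooted tree without terminal vertices, encoded by its root `o`,
the parent map, and the distance-to-root function `len`. Local finiteness and
absence of terminal vertices are part of the structure. -/
structure InfRootedTree (T : Type*) where
  o : T
  parent : T → T
  len : T → ℕ
  len_o : len o = 0
  parent_o : parent o = o
  len_parent : ∀ v, v ≠ o → len (parent v) + 1 = len v
  reach : ∀ v, parent^[len v] v = o
  no_terminal : ∀ v, ∃ w, w ≠ o ∧ parent w = v
  locally_finite : ∀ v, {w | parent w = v}.Finite

/-- The discrete derivative `Df(v) = f(v) - f(v⁻)`, `Df(o) = 0`. -/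
noncomputable def Dop {T : Type*} (t : InfRootedTree T) (f : T → ℂ) (v : T) : ℂ :=
  if v = t.o then 0 else f v - f (t.parent v)

/-- Membership in the Lipschitz space `𝓛`. -/
def InLip {T : Type*} (t : InfRootedTree T) (f : T → ℂ) : Prop :=
  BddAbove (Set.range fun v => ‖Dop t f v‖)

/-- The Lipschitz norm `‖f‖_𝓛 = |f(o)| + sup_v |Df(v)|`. -/
noncomputable def lipNorm {T : Type*} (t : InfRootedTree T) (f : T → ℂ) : ℝ :=
  ‖f t.o‖ + ⨆ v, ‖Dop t f v‖

lemma len_eq_zero {T : Type*} (t : InfRootedTree T) {v : T} (h : t.len v = 0) :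
    v = t.o := by
  have := t.reach v
  rwa [h, Function.iterate_zero, id_eq] at this

lemma telescope {T : Type*} (t : InfRootedTree T) (f : T → ℂ) (hf : InLip t f) :
    ∀ n v, t.len v = n → ‖f v - f t.o‖ ≤ n * ⨆ w, ‖Dop t f w‖ := by
  intro n
  induction n with
  | zero =>
    intro v hv
    rw [len_eq_zero t hv]
    simp
  | succ n ih =>
    intro v hv
    have hvo : v ≠ t.o := by
      intro h; rw [h, t.len_o] at hv; exact Nat.succ_ne_zero n hv.symm
    have hlp : t.len (t.parent v) = n := by
      have := t.len_parent v hvo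
      omega
    have h1 : ‖Dop t f v‖ ≤ ⨆ w, ‖Dop t f w‖ :=
      le_ciSup hf v
    have h2 := ih (t.parent v) hlp
    have : f v - f t.o = Dop t f v + (f (t.parent v) - f t.o) := by
      simp only [Dop, if_neg hvo]; ring
    calc ‖f v - f t.o‖ = ‖Dop t f v + (f (t.parent v) - f t.o)‖ := by rw [← this]
      _ ≤ ‖Dop t f v‖ + ‖f (t.parent v) - f t.o‖ := norm_add_le _ _
      _ ≤ (⨆ w, ‖Dop t f w‖) + n * ⨆ w, ‖Dop t f w‖ := add_le_add h1 h2
      _ = (n + 1 : ℕ) * ⨆ w, ‖Dop t f w‖ := by push_cast; ring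

/-- `ψC_φ : 𝓛 → L^∞` is bounded iff `ψ` is bounded and
`sup_v |ψ(v)|·|φ(v)| < ∞`. -/
theorem stmt10 {T : Type*} (t : InfRootedTree T) (ψ : T → ℂ) (φ : T → T) :
    (∃ C : ℝ, ∀ f : T → ℂ, InLip t f → ∀ v, ‖ψ v * f (φ v)‖ ≤ C * lipNorm t f) ↔
      (BddAbove (Set.range fun v => ‖ψ v‖) ∧
        BddAbove (Set.range fun v => ‖ψ v‖ * t.len (φ v))) := by
  have : Nonempty T := ⟨t.o⟩
  constructor
  · rintro ⟨C, hC⟩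
    constructor
    · -- use f = 1
      have h1 : InLip t (fun _ => (1 : ℂ)) := by
        refine ⟨0, ?_⟩
        rintro x ⟨v, rfl⟩
        simp [Dop]
      have hnorm : lipNorm t (fun _ => (1 : ℂ)) = 1 := by
        unfold lipNorm
        have : ∀ v, ‖Dop t (fun _ => (1 : ℂ)) v‖ = 0 := by
          intro v; simp [Dop]
        simp [this]
      refine ⟨C, ?_⟩
      rintro x ⟨v, rfl⟩
      have := hC _ h1 v
      rw [hnorm, mul_one] at this
      simpa using this
    · -- use f = len
      set g : T → ℂ := fun v => (t.len v : ℂ) with hg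
      have hD : ∀ v, ‖Dop t g v‖ ≤ 1 := by
        intro v
        by_cases hv : v = t.o
        · simp [Dop, hv]
        · have := t.len_parent v hv
          have : (t.len v : ℂ) - (t.len (t.parent v) : ℂ) = 1 := by
            rw [← this]; push_cast; ring
          simp [Dop, hv, hg, this]
      have hInLip : InLip t g := ⟨1, by rintro x ⟨v, rfl⟩; exact hD v⟩
      have hsup : (⨆ v, ‖Dop t g v‖) = 1 := by
        obtain ⟨w, hw, _⟩ := t.no_terminal t.o
        apply le_antisymm
        · exact ciSup_le hD
        · have := t.len_parent w hw
          have h1 : (t.len w : ℂ) - (t.len (t.parent w) : ℂ) = 1 := by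
            rw [← this]; push_cast; ring
          have : ‖Dop t g w‖ = 1 := by simp [Dop, hw, hg, h1]
          rw [← this]
          exact le_ciSup hInLip w
      have hnorm : lipNorm t g = 1 := by
        unfold lipNorm
        rw [hsup]
        simp [hg, t.len_o]
      refine ⟨C, ?_⟩
      rintro x ⟨v, rfl⟩
      have := hC _ hInLip v
      rw [hnorm, mul_one] at this
      simpa [hg, norm_mul, Complex.norm_natCast] using this
  · rintro ⟨⟨C1, hC1⟩, ⟨C2, hC2⟩⟩
    have hC1' : ∀ v, ‖ψ v‖ ≤ C1 := fun v => hC1 ⟨v, rfl⟩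
    have hC2' : ∀ v, ‖ψ v‖ * t.len (φ v) ≤ C2 := fun v => hC2 ⟨v, rfl⟩
    have hC1nn : 0 ≤ C1 := le_trans (norm_nonneg _) (hC1' t.o)
    have hC2nn : 0 ≤ C2 := le_trans (by positivity) (hC2' t.o)
    refine ⟨C1 + C2, ?_⟩
    intro f hf v
    set S := ⨆ w, ‖Dop t f w‖ with hS
    have hSnn : 0 ≤ S := le_trans (by simp [Dop]) (le_ciSup hf t.o)
    have hfo : 0 ≤ ‖f t.o‖ := norm_nonneg _
    have hbound : ‖f (φ v)‖ ≤ ‖f t.o‖ + t.len (φ v) * S := by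
      have := telescope t f hf (t.len (φ v)) (φ v) rfl
      calc ‖f (φ v)‖ = ‖f t.o + (f (φ v) - f t.o)‖ := by ring_nf
        _ ≤ ‖f t.o‖ + ‖f (φ v) - f t.o‖ := norm_add_le _ _
        _ ≤ ‖f t.o‖ + t.len (φ v) * S := by linarith
    calc ‖ψ v * f (φ v)‖ = ‖ψ v‖ * ‖f (φ v)‖ := norm_mul _ _
      _ ≤ ‖ψ v‖ * (‖f t.o‖ + t.len (φ v) * S) :=
          mul_le_mul_of_nonneg_left hbound (norm_nonneg _)
      _ = ‖ψ v‖ * ‖f t.o‖ + (‖ψ v‖ * t.len (φ v)) * S := by ring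
      _ ≤ C1 * ‖f t.o‖ + C2 * S := by
          have := hC1' v
          have := hC2' v
          have hψ : 0 ≤ ‖ψ v‖ := norm_nonneg _
          nlinarith
      _ ≤ (C1 + C2) * lipNorm t f := by
          unfold lipNorm
          rw [← hS]
          nlinarith
end

section
/- Let T be an infinite rooted tree without terminal vertices, ψ : T → ℂ, φ : T → T, and suppose ψC_φ : 𝓛 → L^∞ is bounded. Then its operator norm satisfies max{ ‖ψ‖_∞ , sup_v |ψ(v)|·|φ(v)| } ≤ ‖ψC_φ‖_{𝓛→L^∞} ≤ sup_v |ψ(v)|·(1 + |φ(v)|). -/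
open scoped Classical

namespace Stmt11Aux

variable {T : Type*} (t : InfRootedTree T)

lemma len_eq_zero {v : T} (h : t.len v = 0) : v = t.o := by
  have hr := t.reach v
  rw [h] at hr
  simpa using hr

lemma dop_const (c : ℂ) (v : T) : Dop t (fun _ => c) v = 0 := by
  unfold Dop; split <;> simp

lemma inLip_const (c : ℂ) : InLip t (fun _ => c) := by
  refine ⟨0, ?_⟩
  rintro x ⟨v, rfl⟩
  simp [dop_const]

lemma lipNorm_const (c : ℂ) : lipNorm t (fun _ => c) = ‖c‖ := by
  have : Nonempty T := ⟨t.o⟩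
  simp [lipNorm, dop_const, ciSup_const]

/-- test function `u ↦ min (len u) N`. -/
noncomputable def fmin (N : ℕ) : T → ℂ := fun u => ((min (t.len u) N : ℕ) : ℂ)

lemma dop_fmin_le (N : ℕ) (v : T) : ‖Dop t (fmin t N) v‖ ≤ 1 := by
  unfold Dop fmin
  split
  · simp
  · rename_i hv
    have hlp := t.len_parent v hv
    set a := t.len (t.parent v) with ha
    have hv' : t.len v = a + 1 := by omega
    rw [hv']
    have h1 : min a N ≤ min (a + 1) N := by omega
    have heq : ((min (a + 1) N : ℕ) : ℂ) - ((min a N : ℕ) : ℂ)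
        = ((min (a + 1) N - min a N : ℕ) : ℂ) := by
      push_cast [Nat.cast_sub h1]; ring
    rw [heq]
    have h2 : min (a + 1) N - min a N ≤ 1 := by omega
    rw [Complex.norm_natCast]
    exact_mod_cast h2

lemma inLip_fmin (N : ℕ) : InLip t (fmin t N) := by
  refine ⟨1, ?_⟩
  rintro x ⟨v, rfl⟩
  exact dop_fmin_le t N v

lemma lipNorm_fmin_le (N : ℕ) : lipNorm t (fmin t N) ≤ 1 := by
  have h0 : ‖fmin t N t.o‖ = 0 := by simp [fmin, t.len_o]
  unfold lipNorm
  rw [h0, zero_add]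
  exact Real.iSup_le (dop_fmin_le t N) zero_le_one

lemma fmin_apply_self (v : T) : fmin t (t.len v) v = ((t.len v : ℕ) : ℂ) := by
  simp [fmin]

lemma norm_le_aux (f : T → ℂ) (s : ℝ) (hsb : ∀ v, ‖Dop t f v‖ ≤ s) :
    ∀ n (v : T), t.len v = n → ‖f v‖ ≤ ‖f t.o‖ + n * s := by
  intro n
  induction n with
  | zero =>
      intro v hv
      rw [len_eq_zero t hv]
      simp
  | succ n ih =>
      intro v hv
      have hvo : v ≠ t.o := by
        intro h; rw [h, t.len_o] at hv; omega
      have hD : Dop t f v = f v - f (t.parent v) := by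
        unfold Dop; rw [if_neg hvo]
      have hlp : t.len (t.parent v) = n := by
        have := t.len_parent v hvo; omega
      have h1 := ih (t.parent v) hlp
      have h2 : ‖f v‖ ≤ ‖Dop t f v‖ + ‖f (t.parent v)‖ := by
        rw [hD]
        calc ‖f v‖ = ‖(f v - f (t.parent v)) + f (t.parent v)‖ := by ring_nf
          _ ≤ ‖f v - f (t.parent v)‖ + ‖f (t.parent v)‖ := norm_add_le _ _
      have h3 := hsb v
      push_cast
      push_cast at h1
      linarith

lemma lipNorm_nonneg (f : T → ℂ) (hf : InLip t f) : 0 ≤ lipNorm t f := by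
  have : 0 ≤ ⨆ v, ‖Dop t f v‖ := Real.iSup_nonneg fun v => norm_nonneg _
  unfold lipNorm
  positivity

end Stmt11Aux

/-- if `ψC_φ : 𝓛 → L^∞` is bounded, its operator norm (the supremum of
`‖ψC_φ f‖_∞` over the unit ball of `𝓛`) satisfies
`max{‖ψ‖_∞, sup_v |ψ(v)|·|φ(v)|} ≤ ‖ψC_φ‖ ≤ sup_v |ψ(v)|·(1+|φ(v)|)`. -/


theorem stmt11 {T : Type*} (t : InfRootedTree T) (ψ : T → ℂ) (φ : T → T)
    (hb : ∃ C : ℝ, ∀ f : T → ℂ, InLip t f → ∀ v, ‖ψ v * f (φ v)‖ ≤ C * lipNorm t f) :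
    max (⨆ v, ‖ψ v‖) (⨆ v, ‖ψ v‖ * t.len (φ v)) ≤
        sSup {x : ℝ | ∃ f : T → ℂ, InLip t f ∧ lipNorm t f ≤ 1 ∧
          x = ⨆ v, ‖ψ v * f (φ v)‖} ∧
      sSup {x : ℝ | ∃ f : T → ℂ, InLip t f ∧ lipNorm t f ≤ 1 ∧
          x = ⨆ v, ‖ψ v * f (φ v)‖} ≤ ⨆ v, ‖ψ v‖ * (1 + t.len (φ v)) := by
  classical
  obtain ⟨C, hC⟩ := hb
  have hT : Nonempty T := ⟨t.o⟩
  set A := {x : ℝ | ∃ f : T → ℂ, InLip t f ∧ lipNorm t f ≤ 1 ∧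
      x = ⨆ v, ‖ψ v * f (φ v)‖} with hA
  have h1 := hC (fun _ => 1) (Stmt11Aux.inLip_const t 1)
  rw [Stmt11Aux.lipNorm_const t 1] at h1
  simp only [norm_one, mul_one] at h1
  have hC0 : 0 ≤ C := le_trans (norm_nonneg _) (h1 t.o)
  have hptC : ∀ f : T → ℂ, InLip t f → lipNorm t f ≤ 1 → ∀ v, ‖ψ v * f (φ v)‖ ≤ C := by
    intro f hf hf1 v
    calc ‖ψ v * f (φ v)‖ ≤ C * lipNorm t f := hC f hf v
      _ ≤ C * 1 := by nlinarith
      _ = C := mul_one C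
  have hAbdd : BddAbove A := by
    refine ⟨C, ?_⟩
    rintro x ⟨f, hf, hf1, rfl⟩
    exact Real.iSup_le (hptC f hf hf1) hC0
  have h0A : (0:ℝ) ∈ A := by
    refine ⟨fun _ => 0, Stmt11Aux.inLip_const t 0, by rw [Stmt11Aux.lipNorm_const]; simp, ?_⟩
    simp
  have hS0 : 0 ≤ sSup A := le_csSup hAbdd h0A
  have hpsilen : ∀ v, ‖ψ v‖ * (t.len (φ v) : ℝ) ≤ C := by
    intro v
    have h := hC (Stmt11Aux.fmin t (t.len (φ v))) (Stmt11Aux.inLip_fmin t _) v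
    rw [Stmt11Aux.fmin_apply_self, norm_mul, Complex.norm_natCast] at h
    have h2 := Stmt11Aux.lipNorm_fmin_le t (t.len (φ v))
    nlinarith
  constructor
  · apply max_le
    · have hmem : (⨆ v, ‖ψ v‖) ∈ A := by
        refine ⟨fun _ => 1, Stmt11Aux.inLip_const t 1,
          by rw [Stmt11Aux.lipNorm_const]; simp, ?_⟩
        simp
      exact le_csSup hAbdd hmem
    · refine Real.iSup_le (fun v => ?_) hS0
      set f := Stmt11Aux.fmin t (t.len (φ v)) with hfdef
      have hfl := Stmt11Aux.inLip_fmin t (t.len (φ v))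
      have hf1 := Stmt11Aux.lipNorm_fmin_le t (t.len (φ v))
      have hmem : (⨆ w, ‖ψ w * f (φ w)‖) ∈ A := ⟨f, hfl, hf1, rfl⟩
      have hb2 : BddAbove (Set.range fun w => ‖ψ w * f (φ w)‖) := by
        refine ⟨C, ?_⟩
        rintro x ⟨w, rfl⟩
        exact hptC f hfl hf1 w
      have h3 : ‖ψ v‖ * ((t.len (φ v) : ℕ) : ℝ) ≤ ‖ψ v * f (φ v)‖ := by
        have hfv : f (φ v) = ((t.len (φ v) : ℕ) : ℂ) := Stmt11Aux.fmin_apply_self t (φ v)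
        rw [hfv, norm_mul, Complex.norm_natCast]
      exact le_trans h3 (le_trans (le_ciSup hb2 v) (le_csSup hAbdd hmem))
  · have hMbdd : BddAbove (Set.range fun v => ‖ψ v‖ * (1 + (t.len (φ v) : ℝ))) := by
      refine ⟨2 * C, ?_⟩
      rintro x ⟨v, rfl⟩
      have ha := h1 v
      have hb' := hpsilen v
      show ‖ψ v‖ * (1 + (t.len (φ v) : ℝ)) ≤ 2 * C
      nlinarith [norm_nonneg (ψ v)]
    have hM0 : 0 ≤ ⨆ v, ‖ψ v‖ * (1 + (t.len (φ v) : ℝ)) := by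
      refine le_trans ?_ (le_ciSup hMbdd t.o)
      positivity
    refine Real.sSup_le ?_ hM0
    rintro x ⟨f, hf, hf1, rfl⟩
    refine Real.iSup_le (fun w => ?_) hM0
    unfold lipNorm at hf1
    set s := ⨆ u, ‖Dop t f u‖ with hs
    have hsb : ∀ u, ‖Dop t f u‖ ≤ s := fun u => le_ciSup hf u
    have hfb := Stmt11Aux.norm_le_aux t f s hsb (t.len (φ w)) (φ w) rfl
    have hs0 : 0 ≤ s := Real.iSup_nonneg fun u => norm_nonneg _
    have hfo : 0 ≤ ‖f t.o‖ := norm_nonneg _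
    have hn0 : (0:ℝ) ≤ (t.len (φ w) : ℝ) := Nat.cast_nonneg _
    have hfw : ‖f (φ w)‖ ≤ 1 + (t.len (φ w) : ℝ) := by
      nlinarith [mul_nonneg hn0 (by linarith : (0:ℝ) ≤ 1 - s)]
    calc ‖ψ w * f (φ w)‖ = ‖ψ w‖ * ‖f (φ w)‖ := norm_mul _ _
      _ ≤ ‖ψ w‖ * (1 + (t.len (φ w) : ℝ)) := by nlinarith [norm_nonneg (ψ w)]
      _ ≤ ⨆ v, ‖ψ v‖ * (1 + (t.len (φ v) : ℝ)) := le_ciSup hMbdd w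
end

section
/- Let T be an infinite rooted tree without terminal vertices, ψ : T → ℂ, φ : T → T, and suppose ψC_φ is bounded from 𝓛 to L^∞. If for every ε > 0 there exists N such that |ψ(v)|·|φ(v)| < ε whenever |φ(v)| > N, then ψC_φ : 𝓛 → L^∞ is compact. -/
open scoped Classical

open scoped BoundedContinuousFunction

/-! For `‖f‖_𝓛 ≤ 1` one has `|f(w)| ≤ 1 + |w|`. Fix `N` with `|ψ(v)|·|φ(v)| < ε` whenever
`|φ(v)| > N`. On such `v`, `|ψ(v) f(φ(v))| ≤ 2|ψ(v)|·|φ(v)| < 2ε`; on the others it only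
depends on `f` restricted to the finite ball `{|w| ≤ N}`, where `f` is bounded by `1 + N`.
So the image of the unit ball lies within `2ε` of the image of a compact set under a linear
map from a finite-dimensional space, and is therefore totally bounded. -/

lemma Metric.totallyBounded_of_forall_exists_dist_le {α : Type*} [PseudoMetricSpace α]
    {s : Set α} (H : ∀ ε > 0, ∃ K : Set α, TotallyBounded K ∧ ∀ x ∈ s, ∃ y ∈ K, dist x y ≤ ε) :
    TotallyBounded s := by
  rw [Metric.totallyBounded_iff]
  intro ε hε
  obtain ⟨K, hK, hsK⟩ := H (ε / 2) (half_pos hε)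
  obtain ⟨F, hF, hKF⟩ := Metric.totallyBounded_iff.mp hK (ε / 2) (half_pos hε)
  refine ⟨F, hF, fun x hx => ?_⟩
  obtain ⟨y, hyK, hxy⟩ := hsK x hx
  obtain ⟨z, hzF, hyz⟩ := Set.mem_iUnion₂.mp (hKF hyK)
  refine Set.mem_iUnion₂.mpr ⟨z, hzF, ?_⟩
  rw [Metric.mem_ball] at hyz ⊢
  calc dist x z ≤ dist x y + dist y z := dist_triangle x y z
    _ < ε / 2 + ε / 2 := add_lt_add_of_le_of_lt hxy hyz
    _ = ε := add_halves ε

section WeightedCompExtendByZero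

variable {T : Type*} [TopologicalSpace T] [DiscreteTopology T]

noncomputable def weightedCompExtendByZero (ψ : T → ℂ) (φ : T → T) {C : ℝ}
    (hψ : ∀ v, ‖ψ v‖ ≤ C) (W : Finset T) : (W → ℂ) →ₗ[ℂ] T →ᵇ ℂ where
  toFun x := BoundedContinuousFunction.ofNormedAddCommGroupDiscrete
    (fun v => ψ v * if h : φ v ∈ W then x ⟨φ v, h⟩ else 0) (C * ‖x‖) fun v => by
      rw [norm_mul]
      refine mul_le_mul (hψ v) ?_ (norm_nonneg _) ((norm_nonneg _).trans (hψ v))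
      split_ifs
      · exact norm_le_pi_norm x _
      · simp
  map_add' x y := by
    ext v
    simp only [BoundedContinuousFunction.coe_ofNormedAddCommGroupDiscrete,
      BoundedContinuousFunction.coe_add, Pi.add_apply]
    split_ifs <;> simp [mul_add]
  map_smul' c x := by
    ext v
    simp only [BoundedContinuousFunction.coe_ofNormedAddCommGroupDiscrete,
      BoundedContinuousFunction.coe_smul, Pi.smul_apply, RingHom.id_apply, smul_eq_mul]
    split_ifs <;> simp [mul_left_comm]

lemma weightedCompExtendByZero_apply {ψ : T → ℂ} {φ : T → T} {C : ℝ} (hψ : ∀ v, ‖ψ v‖ ≤ C)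
    (W : Finset T) (x : W → ℂ) (v : T) :
    weightedCompExtendByZero ψ φ hψ W x v = ψ v * if h : φ v ∈ W then x ⟨φ v, h⟩ else 0 :=
  rfl

end WeightedCompExtendByZero

namespace InfRootedTree

variable {T : Type*} (t : InfRootedTree T)

lemma eq_o_of_len_eq_zero {w : T} (hw : t.len w = 0) : w = t.o := by
  simpa [hw] using t.reach w

lemma len_parent_eq (w : T) : t.len (t.parent w) = t.len w - 1 := by
  by_cases hw : w = t.o
  · simp [hw, t.parent_o, t.len_o]
  · have := t.len_parent w hw
    omega

lemma finite_setOf_len_le (N : ℕ) : {w : T | t.len w ≤ N}.Finite := by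
  induction N with
  | zero =>
    exact (Set.finite_singleton t.o).subset fun w hw =>
      t.eq_o_of_len_eq_zero (Nat.le_zero.mp hw)
  | succ n ih =>
    refine (ih.preimage' fun v _ => t.locally_finite v).subset fun w hw => ?_
    change t.len w ≤ n + 1 at hw
    change t.len (t.parent w) ≤ n
    rw [t.len_parent_eq]
    omega

lemma Dop_of_ne {f : T → ℂ} {v : T} (hv : v ≠ t.o) : Dop t f v = f v - f (t.parent v) :=
  if_neg hv

lemma norm_apply_le_of_forall_norm_Dop_le {f : T → ℂ} {M : ℝ} (hM : ∀ v, ‖Dop t f v‖ ≤ M)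
    (w : T) : ‖f w‖ ≤ ‖f t.o‖ + t.len w * M := by
  induction hn : t.len w generalizing w with
  | zero => simp [t.eq_o_of_len_eq_zero hn]
  | succ n ih =>
    have hw : w ≠ t.o := by
      rintro rfl
      simp [t.len_o] at hn
    have hparent := ih (t.parent w) (by rw [t.len_parent_eq, hn, Nat.add_sub_cancel])
    calc ‖f w‖ = ‖f (t.parent w) + Dop t f w‖ := by rw [t.Dop_of_ne hw, add_sub_cancel]
      _ ≤ ‖f (t.parent w)‖ + ‖Dop t f w‖ := norm_add_le _ _
      _ ≤ ‖f t.o‖ + n * M + M := add_le_add hparent (hM w)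
      _ = ‖f t.o‖ + ↑(n + 1) * M := by push_cast; ring

lemma norm_apply_le_mul_lipNorm {f : T → ℂ} (hf : InLip t f) (w : T) :
    ‖f w‖ ≤ (1 + t.len w) * lipNorm t f := by
  have hD : 0 ≤ ⨆ v, ‖Dop t f v‖ := Real.iSup_nonneg fun _ => norm_nonneg _
  calc ‖f w‖ ≤ ‖f t.o‖ + t.len w * ⨆ v, ‖Dop t f v‖ :=
        t.norm_apply_le_of_forall_norm_Dop_le (le_ciSup hf) w
    _ ≤ (1 + t.len w) * lipNorm t f := by
        unfold lipNorm
        nlinarith [norm_nonneg (f t.o), (t.len w).cast_nonneg (α := ℝ)]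

lemma Dop_const (c : ℂ) (v : T) : Dop t (fun _ => c) v = 0 := by
  unfold Dop
  split_ifs <;> simp

lemma inLip_const (c : ℂ) : InLip t fun _ => c :=
  ⟨0, by rintro _ ⟨v, rfl⟩; simp [Dop_const]⟩

lemma lipNorm_const (c : ℂ) : lipNorm t (fun _ => c) = ‖c‖ := by
  simp [lipNorm, Dop_const]

section WeightedComposition

variable {ψ : T → ℂ} {φ : T → T}

lemma norm_le_of_forall_norm_mul_comp_le {C : ℝ}
    (hC : ∀ f : T → ℂ, InLip t f → ∀ v, ‖ψ v * f (φ v)‖ ≤ C * lipNorm t f) (v : T) :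
    ‖ψ v‖ ≤ C := by
  simpa [t.lipNorm_const] using hC _ (t.inLip_const 1) v

variable [TopologicalSpace T] [DiscreteTopology T]

lemma exists_dist_weightedCompExtendByZero_le {C ε : ℝ} (hψ : ∀ v, ‖ψ v‖ ≤ C) (hε : 0 ≤ ε)
    {N : ℕ} (hN : ∀ v, N < t.len (φ v) → ‖ψ v‖ * t.len (φ v) < ε) {f : T → ℂ} (hf : InLip t f)
    (hf1 : lipNorm t f ≤ 1) (g : T →ᵇ ℂ) (hg : ∀ v, g v = ψ v * f (φ v)) :
    ∃ x ∈ Metric.closedBall (0 : (t.finite_setOf_len_le N).toFinset → ℂ) (1 + N),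
      dist g (weightedCompExtendByZero ψ φ hψ _ x) ≤ 2 * ε := by
  have hbound (w : T) : ‖f w‖ ≤ 1 + t.len w :=
    (t.norm_apply_le_mul_lipNorm hf w).trans
      (mul_le_of_le_one_right (by positivity) hf1)
  refine ⟨fun w => f w, ?_, ?_⟩
  · rw [mem_closedBall_zero_iff, pi_norm_le_iff_of_nonneg (by positivity)]
    intro ⟨w, hw⟩
    have hwN : t.len w ≤ N := (t.finite_setOf_len_le N).mem_toFinset.mp hw
    exact (hbound w).trans (by gcongr)
  · refine (BoundedContinuousFunction.dist_le (by positivity)).mpr fun v => ?_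
    rw [hg, weightedCompExtendByZero_apply, dist_eq_norm]
    split_ifs with hv
    · simpa using hε
    · have hlt : N < t.len (φ v) := by
        by_contra! hle
        exact hv ((t.finite_setOf_len_le N).mem_toFinset.mpr hle)
      have hone : (1 : ℝ) ≤ t.len (φ v) := by exact_mod_cast hlt.trans_le' (Nat.zero_le N)
      calc ‖ψ v * f (φ v) - ψ v * 0‖ = ‖ψ v‖ * ‖f (φ v)‖ := by simp
        _ ≤ ‖ψ v‖ * (2 * t.len (φ v)) := by gcongr; linarith [hbound (φ v)]
        _ ≤ 2 * ε := by nlinarith [hN v hlt]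

end WeightedComposition

end InfRootedTree

/-- if `ψC_φ : 𝓛 → L^∞` is bounded and `|ψ(v)|·|φ(v)| → 0` as
`|φ(v)| → ∞`, then `ψC_φ : 𝓛 → L^∞` is compact, i.e. the image of the unit ball of `𝓛`
is relatively compact in `L^∞ = T →ᵇ ℂ` (`T` discrete). -/
theorem stmt12 {T : Type*} [TopologicalSpace T] [DiscreteTopology T] (t : InfRootedTree T)
    (ψ : T → ℂ) (φ : T → T)
    (hb : ∃ C : ℝ, ∀ f : T → ℂ, InLip t f → ∀ v, ‖ψ v * f (φ v)‖ ≤ C * lipNorm t f)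
    (h : ∀ ε : ℝ, 0 < ε → ∃ N : ℕ, ∀ v, N < t.len (φ v) → ‖ψ v‖ * t.len (φ v) < ε) :
    IsCompact (closure {g : T →ᵇ ℂ | ∃ f : T → ℂ, InLip t f ∧ lipNorm t f ≤ 1 ∧
      ∀ v, g v = ψ v * f (φ v)}) := by
  obtain ⟨C, hC⟩ := hb
  have hψ := t.norm_le_of_forall_norm_mul_comp_le hC
  refine (totallyBounded_closure.mpr ?_).isCompact_of_isClosed isClosed_closure
  refine Metric.totallyBounded_of_forall_exists_dist_le fun ε hε => ?_
  obtain ⟨N, hN⟩ := h (ε / 2) (half_pos hε)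
  let L := weightedCompExtendByZero ψ φ hψ (t.finite_setOf_len_le N).toFinset
  refine ⟨L '' Metric.closedBall 0 (1 + N),
    ((isCompact_closedBall _ _).image L.continuous_of_finiteDimensional).totallyBounded, ?_⟩
  rintro g ⟨f, hf, hf1, hg⟩
  obtain ⟨x, hx, hdist⟩ :=
    t.exists_dist_weightedCompExtendByZero_le hψ (half_pos hε).le hN hf hf1 g hg
  exact ⟨L x, Set.mem_image_of_mem L hx, by linarith⟩
end

section
/- Let T be an infinite rooted tree without terminal vertices and let ψ : T → ℂ, φ : T → T be such that ψC_φ is bounded on L^∞ and the range φ(T) is infinite. Then the essential norm of ψC_φ on L^∞ equals limsup_{|φ(v)|→∞} |ψ(v)|, i.e. the infimum over N of sup{|ψ(v)| : |φ(v)| > N}. -/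
open scoped Classical

open scoped BoundedContinuousFunction

lemma levelFinite {T : Type*} (t : InfRootedTree T) (n : ℕ) : {w | t.len w = n}.Finite := by
  induction n with
  | zero =>
    refine Set.Finite.subset (Set.finite_singleton t.o) ?_
    intro w hw
    have h := t.reach w
    simp only [Set.mem_setOf_eq] at hw
    rw [hw] at h
    simpa using h
  | succ n ih =>
    refine Set.Finite.subset (Set.Finite.biUnion ih (fun v _ => t.locally_finite v)) ?_
    intro w hw
    simp only [Set.mem_setOf_eq] at hw
    have hwo : w ≠ t.o := by
      intro h; rw [h, t.len_o] at hw; omega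
    have hp : t.len (t.parent w) = n := by
      have := t.len_parent w hwo; omega
    exact Set.mem_biUnion (show t.len (t.parent w) = n from hp) rfl

lemma ballFinite {T : Type*} (t : InfRootedTree T) (N : ℕ) : {w | t.len w ≤ N}.Finite := by
  refine Set.Finite.subset ((Set.finite_Iic N).biUnion (fun n _ => levelFinite t n)) ?_
  intro w hw
  exact Set.mem_biUnion (show t.len w ∈ Set.Iic N from hw) rfl

open scoped BoundedContinuousFunction

noncomputable def deltaBCF {T : Type*} [TopologicalSpace T] [DiscreteTopology T] (w : T) :
    T →ᵇ ℂ :=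
  BoundedContinuousFunction.ofNormedAddCommGroup (fun x => if x = w then 1 else 0)
    continuous_of_discreteTopology 1 (by intro x; split <;> simp)

lemma deltaBCF_apply {T : Type*} [TopologicalSpace T] [DiscreteTopology T] (w x : T) :
    deltaBCF w x = if x = w then 1 else 0 := rfl

lemma norm_deltaBCF_le {T : Type*} [TopologicalSpace T] [DiscreteTopology T] (w : T) :
    ‖deltaBCF w‖ ≤ 1 := by
  refine (BoundedContinuousFunction.norm_le zero_le_one).2 ?_
  intro x
  rw [deltaBCF_apply]
  split <;> simp

noncomputable def cutOp {T : Type*} [TopologicalSpace T] [DiscreteTopology T] (P : T → Prop)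
    [DecidablePred P] :
    (T →ᵇ ℂ) →L[ℂ] (T →ᵇ ℂ) :=
  LinearMap.mkContinuous
    { toFun := fun f => BoundedContinuousFunction.ofNormedAddCommGroup
        (fun v => if P v then f v else 0) continuous_of_discreteTopology ‖f‖
        (by intro v; split
            · exact f.norm_coe_le_norm v
            · simp)
      map_add' := by
        intro f g
        ext v
        simp only [BoundedContinuousFunction.coe_ofNormedAddCommGroup,
          BoundedContinuousFunction.coe_add, Pi.add_apply]
        split <;> simp
      map_smul' := by
        intro c f
        ext v
        simp only [BoundedContinuousFunction.coe_ofNormedAddCommGroup,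
          BoundedContinuousFunction.coe_smul, Pi.smul_apply, RingHom.id_apply]
        split <;> simp }
    1 (fun f => by
      rw [one_mul]
      refine (BoundedContinuousFunction.norm_le (norm_nonneg f)).2 ?_
      intro v
      dsimp only [LinearMap.coe_mk, AddHom.coe_mk,
        BoundedContinuousFunction.coe_ofNormedAddCommGroup]
      split
      · exact f.norm_coe_le_norm v
      · simp)

lemma cutOp_apply {T : Type*} [TopologicalSpace T] [DiscreteTopology T] (P : T → Prop)
    [DecidablePred P]
    (f : T →ᵇ ℂ) (v : T) : cutOp P f v = if P v then f v else 0 := rfl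


set_option maxHeartbeats 1000000 in
set_option synthInstance.maxHeartbeats 200000 in
/-- if `ψC_φ` is bounded on `L^∞ = T →ᵇ ℂ` (`T` discrete) and `φ(T)` is
infinite, the essential norm of `ψC_φ` on `L^∞` equals `limsup_{|φ(v)|→∞} |ψ(v)|`, i.e.
the infimum over `N` of `sup {|ψ(v)| : |φ(v)| > N}`. -/
theorem stmt14 {T : Type*} [TopologicalSpace T] [DiscreteTopology T] (t : InfRootedTree T)
    (ψ : T → ℂ) (φ : T → T) (hφ : (Set.range φ).Infinite)
    (A : (T →ᵇ ℂ) →L[ℂ] (T →ᵇ ℂ)) (hA : ∀ f : T →ᵇ ℂ, ∀ v : T, A f v = ψ v * f (φ v)) :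
    sInf {x : ℝ | ∃ K : (T →ᵇ ℂ) →L[ℂ] (T →ᵇ ℂ), IsCompactOperator K ∧ x = ‖A - K‖} =
      ⨅ N : ℕ, ⨆ v : {v : T // N < t.len (φ v)}, ‖ψ v.1‖ := by
  haveI : Nonempty T := ⟨t.o⟩
  have hψle : ∀ v, ‖ψ v‖ ≤ ‖A 1‖ := by
    intro v
    have h1 : (A 1) v = ψ v := by rw [hA]; simp
    rw [← h1]; exact (A 1).norm_coe_le_norm v
  have hex : ∀ N : ℕ, ∃ v, N < t.len (φ v) := by
    intro N
    by_contra h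
    push_neg at h
    have hsub : Set.range φ ⊆ {w | t.len w ≤ N} := by
      rintro _ ⟨v, rfl⟩; exact h v
    exact hφ ((ballFinite t N).subset hsub)
  have hne : ∀ N : ℕ, Nonempty {v : T // N < t.len (φ v)} :=
    fun N => nonempty_subtype.mpr (hex N)
  set s : ℕ → ℝ := fun N => ⨆ v : {v : T // N < t.len (φ v)}, ‖ψ v.1‖ with hs_def
  have hbdd : ∀ N : ℕ,
      BddAbove (Set.range fun v : {v : T // N < t.len (φ v)} => ‖ψ v.1‖) :=
    fun N => ⟨‖A 1‖, by rintro x ⟨v, rfl⟩; exact hψle v.1⟩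
  have hs0 : ∀ N, 0 ≤ s N := by
    intro N
    haveI := hne N
    exact le_trans (norm_nonneg _) (le_ciSup (hbdd N) (hne N).some)
  have hSne : Set.Nonempty
      {x : ℝ | ∃ K : (T →ᵇ ℂ) →L[ℂ] (T →ᵇ ℂ), IsCompactOperator K ∧ x = ‖A - K‖} :=
    ⟨‖A - 0‖, 0, isCompactOperator_zero, rfl⟩
  have hSbdd : BddBelow
      {x : ℝ | ∃ K : (T →ᵇ ℂ) →L[ℂ] (T →ᵇ ℂ), IsCompactOperator K ∧ x = ‖A - K‖} :=
    ⟨0, by rintro x ⟨K, hK, rfl⟩; exact norm_nonneg _⟩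
  refine le_antisymm (le_ciInf ?_) (le_csInf hSne ?_)
  · -- upper bound : sInf ≤ s N for each N
    intro N
    haveI := hne N
    obtain ⟨KN, hKNv⟩ : ∃ KN : (T →ᵇ ℂ) →L[ℂ] (T →ᵇ ℂ),
        ∀ (f : T →ᵇ ℂ) (v : T), KN f v = if t.len (φ v) ≤ N then A f v else 0 :=
      ⟨(cutOp fun v => t.len (φ v) ≤ N).comp A, fun f v => rfl⟩
    have hKNc : IsCompactOperator KN := by
      have hSfin : ({w | t.len w ≤ N} : Set T).Finite := ballFinite t N
      haveI : Fintype {x : T // t.len x ≤ N} := hSfin.fintype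
      let B : ({x : T // t.len x ≤ N} → ℂ) → (T →ᵇ ℂ) := fun g =>
        BoundedContinuousFunction.ofNormedAddCommGroup
          (fun v => if h : t.len (φ v) ≤ N then ψ v * g ⟨φ v, h⟩ else 0)
          continuous_of_discreteTopology (‖A 1‖ * ‖g‖)
          (by
            intro v
            split
            · rename_i h
              rw [norm_mul]
              exact mul_le_mul (hψle v) (norm_le_pi_norm g _) (norm_nonneg _) (norm_nonneg _)
            · simpa using mul_nonneg (norm_nonneg (A 1)) (norm_nonneg g))
      have hB : Continuous B := by
        refine (LipschitzWith.of_dist_le_mul (K := ‖A 1‖₊) ?_).continuous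
        intro g g'
        rw [coe_nnnorm]
        refine (BoundedContinuousFunction.dist_le
          (mul_nonneg (norm_nonneg _) dist_nonneg)).2 ?_
        intro v
        show dist (if h : t.len (φ v) ≤ N then ψ v * g ⟨φ v, h⟩ else 0)
          (if h : t.len (φ v) ≤ N then ψ v * g' ⟨φ v, h⟩ else 0)
          ≤ ‖A 1‖ * dist g g'
        split
        · rename_i h
          rw [dist_eq_norm, ← mul_sub, norm_mul]
          refine mul_le_mul (hψle v) ?_ (norm_nonneg _) (norm_nonneg _)
          rw [← dist_eq_norm]
          exact dist_le_pi_dist g g' _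
        · simpa using mul_nonneg (norm_nonneg (A 1)) dist_nonneg
      refine ⟨B '' Metric.closedBall 0 1,
        (isCompact_closedBall (0 : {x : T // t.len x ≤ N} → ℂ) 1).image hB, ?_⟩
      refine Filter.mem_of_superset (Metric.closedBall_mem_nhds 0 one_pos) ?_
      intro f hf
      rw [Metric.mem_closedBall, dist_zero_right] at hf
      refine ⟨fun w : {x : T // t.len x ≤ N} => f w.1, ?_, ?_⟩
      · rw [Metric.mem_closedBall, dist_zero_right]
        refine (pi_norm_le_iff_of_nonneg zero_le_one).2 ?_
        intro w
        exact le_trans (f.norm_coe_le_norm w.1) hf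
      · ext v
        show (if h : t.len (φ v) ≤ N then ψ v * f (φ v) else 0) = KN f v
        rw [hKNv]
        by_cases h : t.len (φ v) ≤ N
        · rw [dif_pos h, if_pos h, hA]
        · rw [dif_neg h, if_neg h]
    have hub : ‖A - KN‖ ≤ s N := by
      refine ContinuousLinearMap.opNorm_le_bound _ (hs0 N) ?_
      intro f
      refine (BoundedContinuousFunction.norm_le
        (mul_nonneg (hs0 N) (norm_nonneg f))).2 ?_
      intro v
      have hval : ((A - KN) f) v = A f v - KN f v := rfl
      by_cases h : t.len (φ v) ≤ N
      · rw [hval, hKNv, if_pos h, sub_self, norm_zero]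
        exact mul_nonneg (hs0 N) (norm_nonneg f)
      · rw [hval, hKNv, if_neg h, sub_zero, hA, norm_mul]
        have h1 : ‖ψ v‖ ≤ s N := le_ciSup (hbdd N) ⟨v, lt_of_not_ge h⟩
        exact mul_le_mul h1 (f.norm_coe_le_norm _) (norm_nonneg _) (hs0 N)
    exact le_trans (csInf_le hSbdd ⟨KN, hKNc, rfl⟩) hub
  · -- lower bound
    rintro x ⟨K, hK, rfl⟩
    have hinfbdd : BddBelow (Set.range s) := ⟨0, by rintro x ⟨N, rfl⟩; exact hs0 N⟩
    refine le_of_forall_pos_le_add ?_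
    intro ε hε
    set ε' : ℝ := ε / 3 with hε'_def
    have hε' : 0 < ε' := by positivity
    obtain ⟨Cs, hCc, hCmem⟩ := hK
    obtain ⟨r0, hr0, hball⟩ := Metric.mem_nhds_iff.1 hCmem
    set r : ℝ := r0 / 2 with hr_def
    have hr : 0 < r := by positivity
    have hrlt : r < r0 := by linarith
    have hpick : ∀ N : ℕ, ∃ v, N < t.len (φ v) ∧ (⨅ M, s M) - ε' < ‖ψ v‖ := by
      intro N
      haveI := hne N
      have h1 : (⨅ M, s M) ≤ s N := ciInf_le hinfbdd N
      have h2 : s N - ε' < s N := by linarith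
      obtain ⟨v, hv⟩ := exists_lt_of_lt_ciSup (hs_def ▸ h2)
      exact ⟨v.1, v.2, by linarith⟩
    let u : ℕ → T := fun n =>
      Nat.rec (hpick 0).choose (fun _ prev => (hpick (t.len (φ prev))).choose) n
    have hu_lt : ∀ n, (⨅ M, s M) - ε' < ‖ψ (u n)‖ := by
      intro n
      cases n with
      | zero => exact (hpick 0).choose_spec.2
      | succ n => exact (hpick (t.len (φ (u n)))).choose_spec.2
    have hu_mono : StrictMono fun n => t.len (φ (u n)) := by
      refine strictMono_nat_of_lt_succ ?_
      intro n
      exact (hpick (t.len (φ (u n)))).choose_spec.1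
    have hu_inj : ∀ m n : ℕ, m ≠ n → φ (u m) ≠ φ (u n) := by
      intro m n hmn h
      exact hmn (hu_mono.injective (by rw [h]))
    set f : ℕ → (T →ᵇ ℂ) := fun n => deltaBCF (φ (u n)) with hf_def
    have hg : ∀ n, K ((r : ℂ) • f n) ∈ Cs := by
      intro n
      apply hball
      rw [Metric.mem_ball, dist_zero_right, norm_smul, Complex.norm_real,
        Real.norm_eq_abs, abs_of_pos hr]
      calc r * ‖f n‖ ≤ r * 1 := by
            exact mul_le_mul_of_nonneg_left (norm_deltaBCF_le _) hr.le
        _ < r0 := by linarith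
    obtain ⟨a, -, σ, hσ, hconv⟩ := hCc.tendsto_subseq hg
    obtain ⟨M, hM⟩ := (Metric.tendsto_atTop.1 hconv) (r * ε') (by positivity)
    have hmn : σ M < σ (M + 1) := hσ (Nat.lt_succ_self M)
    have hKdiff : ‖K (f (σ M)) - K (f (σ (M + 1)))‖ < 2 * ε' := by
      have h1 := hM M le_rfl
      have h2 := hM (M + 1) (Nat.le_succ M)
      simp only [Function.comp_apply] at h1 h2
      have hd : dist (K ((r : ℂ) • f (σ M))) (K ((r : ℂ) • f (σ (M + 1)))) < 2 * (r * ε') := by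
        calc dist (K ((r : ℂ) • f (σ M))) (K ((r : ℂ) • f (σ (M + 1))))
            ≤ dist (K ((r : ℂ) • f (σ M))) a + dist (K ((r : ℂ) • f (σ (M + 1)))) a :=
              dist_triangle_right _ _ _
          _ < r * ε' + r * ε' := add_lt_add h1 h2
          _ = 2 * (r * ε') := by ring
      rw [dist_eq_norm, ← map_sub, ← smul_sub, map_smul, norm_smul, Complex.norm_real,
        Real.norm_eq_abs, abs_of_pos hr, map_sub] at hd
      nlinarith
    have hfeval : (f (σ M) - f (σ (M + 1))) (φ (u (σ M))) = 1 := by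
      have hne' : φ (u (σ M)) ≠ φ (u (σ (M + 1))) := hu_inj _ _ (Nat.ne_of_lt hmn)
      simp only [BoundedContinuousFunction.coe_sub, Pi.sub_apply, hf_def, deltaBCF_apply]
      rw [if_neg hne']
      simp
    have hnorm_fmn : ‖f (σ M) - f (σ (M + 1))‖ ≤ 1 := by
      refine (BoundedContinuousFunction.norm_le zero_le_one).2 ?_
      intro y
      simp only [BoundedContinuousFunction.coe_sub, Pi.sub_apply, hf_def, deltaBCF_apply]
      split_ifs <;> simp
    have key : ‖ψ (u (σ M))‖ - 2 * ε' ≤ ‖A - K‖ := by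
      have h2 : ((A - K) (f (σ M) - f (σ (M + 1)))) (u (σ M))
          = ψ (u (σ M)) - (K (f (σ M) - f (σ (M + 1)))) (u (σ M)) := by
        have : A (f (σ M) - f (σ (M + 1))) (u (σ M)) = ψ (u (σ M)) := by
          rw [hA, hfeval, mul_one]
        simp only [ContinuousLinearMap.sub_apply, BoundedContinuousFunction.coe_sub,
          Pi.sub_apply, this]
      have h1 : ‖((A - K) (f (σ M) - f (σ (M + 1)))) (u (σ M))‖ ≤ ‖A - K‖ := by
        refine le_trans (((A - K) (f (σ M) - f (σ (M + 1)))).norm_coe_le_norm (u (σ M))) ?_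
        calc ‖(A - K) (f (σ M) - f (σ (M + 1)))‖
            ≤ ‖A - K‖ * ‖f (σ M) - f (σ (M + 1))‖ := (A - K).le_opNorm _
          _ ≤ ‖A - K‖ * 1 := mul_le_mul_of_nonneg_left hnorm_fmn (norm_nonneg _)
          _ = ‖A - K‖ := mul_one _
      have h3 : ‖(K (f (σ M) - f (σ (M + 1)))) (u (σ M))‖ ≤ ‖K (f (σ M) - f (σ (M + 1)))‖ :=
        (K (f (σ M) - f (σ (M + 1)))).norm_coe_le_norm (u (σ M))
      have h4 : ‖K (f (σ M) - f (σ (M + 1)))‖ < 2 * ε' := by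
        rw [map_sub]; exact hKdiff
      have h5 : ‖ψ (u (σ M))‖ - ‖(K (f (σ M) - f (σ (M + 1)))) (u (σ M))‖
          ≤ ‖ψ (u (σ M)) - (K (f (σ M) - f (σ (M + 1)))) (u (σ M))‖ := norm_sub_norm_le _ _
      rw [← h2] at h5
      linarith
    have h6 := hu_lt (σ M)
    rw [hε'_def] at hε' key h6
    linarith
end

section
/- Let T be an infinite rooted tree without terminal vertices. For any function ψ : T → ℂ and any self-map φ of T, the weighted composition operator ψC_φ acting from the Lipschitz space 𝓛 to L^∞ is never an isometry (i.e., there is no pair (ψ, φ) with ‖ψC_φ f‖_∞ = ‖f‖_𝓛 for all f ∈ 𝓛). -/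
open scoped Classical

/-- for no pair `(ψ, φ)` is the weighted composition operator
`ψC_φ : 𝓛 → L^∞` an isometry. -/
theorem stmt15 {T : Type*} (t : InfRootedTree T) (ψ : T → ℂ) (φ : T → T) :
    ¬ ((∀ f : T → ℂ, InLip t f → BddAbove (Set.range fun v => ‖ψ v * f (φ v)‖)) ∧
        (∀ f : T → ℂ, InLip t f → (⨆ v, ‖ψ v * f (φ v)‖) = lipNorm t f)) := by

  haveI : Nonempty T := ⟨t.o⟩
  rintro ⟨hbdd, hiso⟩
  -- the constant function 1
  have hD1 : ∀ v, Dop t (fun _ => (1:ℂ)) v = 0 := by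
    intro v; unfold Dop; split <;> simp
  have hlip1 : InLip t (fun _ => (1:ℂ)) := by
    refine ⟨0, ?_⟩; rintro x ⟨v, rfl⟩; simp [hD1]
  have hnorm1 : lipNorm t (fun _ => (1:ℂ)) = 1 := by
    unfold lipNorm; simp [hD1]
  have hb1 := hbdd _ hlip1
  have hs1 := hiso _ hlip1
  rw [hnorm1] at hs1
  simp only [mul_one] at hb1 hs1
  -- hence each ‖ψ v‖ ≤ 1
  have hψle : ∀ v, ‖ψ v‖ ≤ 1 := by
    intro v
    calc ‖ψ v‖ ≤ ⨆ v, ‖ψ v‖ := le_ciSup hb1 v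
    _ = 1 := hs1
  -- the indicator of the root
  set g : T → ℂ := fun v => if v = t.o then 1 else 0 with hg
  have hDg : ∀ v, ‖Dop t g v‖ ≤ 1 := by
    intro v
    unfold Dop
    split
    · simp
    · simp only [hg]
      rw [if_neg (by assumption)]
      split <;> simp
  have hlipg : InLip t g := ⟨1, by rintro x ⟨v, rfl⟩; exact hDg v⟩
  obtain ⟨w, hw, hpw⟩ := t.no_terminal t.o
  have hDgw : ‖Dop t g w‖ = 1 := by
    unfold Dop
    rw [if_neg hw]
    simp [hg, hw, hpw]
  have hnormg : lipNorm t g = 2 := by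
    have hsup : (⨆ v, ‖Dop t g v‖) = 1 := by
      apply le_antisymm
      · exact ciSup_le hDg
      · rw [← hDgw]
        exact le_ciSup hlipg w
    unfold lipNorm
    rw [hsup]
    simp [hg]
    norm_num
  have hsg := hiso _ hlipg
  rw [hnormg] at hsg
  have : (⨆ v, ‖ψ v * g (φ v)‖) ≤ 1 := by
    apply ciSup_le
    intro v
    calc ‖ψ v * g (φ v)‖ = ‖ψ v‖ * ‖g (φ v)‖ := norm_mul _ _
    _ ≤ 1 * 1 := by
        apply mul_le_mul (hψle v) ?_ (norm_nonneg _) zero_le_one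
        simp only [hg]; split <;> simp
    _ = 1 := one_mul 1
  linarith [hsg ▸ this]
end

section
/- Let T be an infinite rooted tree without terminal vertices, ψ : T → ℂ, and φ : T → T surjective, with ψC_φ bounded from 𝓛 to L^∞. Set M = inf_{w∈T} ( sup_{v∈φ⁻¹(w)} |ψ(v)| ). Then the injectivity modulus of ψC_φ : 𝓛 → L^∞ satisfies M/3 ≤ j(ψC_φ) ≤ M. -/
open scoped Classical


lemma real_iSup_prop (P : Prop) (a : ℝ) : (⨆ _ : P, a) = if P then a else 0 := by
  split_ifs with h
  · haveI : Nonempty P := ⟨h⟩; exact ciSup_const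
  · haveI : IsEmpty P := ⟨fun hp => h hp⟩; exact Real.iSup_of_isEmpty _

/-- for `φ` surjective and `ψC_φ : 𝓛 → L^∞` bounded, with
`M = inf_w sup_{v ∈ φ⁻¹(w)} |ψ(v)|`, the injectivity modulus
`j(ψC_φ) = inf {‖ψC_φ f‖_∞ : ‖f‖_𝓛 = 1}` satisfies `M/3 ≤ j(ψC_φ) ≤ M`. -/
theorem stmt16 {T : Type*} (t : InfRootedTree T) (ψ : T → ℂ) (φ : T → T)
    (hφ : Function.Surjective φ)
    (hb : ∃ C : ℝ, ∀ f : T → ℂ, InLip t f → ∀ v, ‖ψ v * f (φ v)‖ ≤ C * lipNorm t f) :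
    (⨅ w : T, ⨆ v ∈ φ ⁻¹' {w}, ‖ψ v‖) / 3 ≤
        sInf {x : ℝ | ∃ f : T → ℂ, InLip t f ∧ lipNorm t f = 1 ∧
          x = ⨆ v, ‖ψ v * f (φ v)‖} ∧
      sInf {x : ℝ | ∃ f : T → ℂ, InLip t f ∧ lipNorm t f = 1 ∧
          x = ⨆ v, ‖ψ v * f (φ v)‖} ≤ ⨅ w : T, ⨆ v ∈ φ ⁻¹' {w}, ‖ψ v‖ := by

  haveI : Nonempty T := ⟨t.o⟩
  simp only [Set.mem_preimage, Set.mem_singleton_iff]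
  obtain ⟨C, hC⟩ := hb
  -- the constant one function
  have hDone : ∀ v, Dop t (fun _ => (1:ℂ)) v = 0 := by
    intro v; unfold Dop; split_ifs <;> simp
  have hone_lip : InLip t (fun _ => (1:ℂ)) := by
    refine ⟨0, ?_⟩; rintro x ⟨v, rfl⟩; simp [hDone]
  have hone_norm : lipNorm t (fun _ => (1:ℂ)) = 1 := by
    unfold lipNorm
    have : (fun v => ‖Dop t (fun _ => (1:ℂ)) v‖) = fun _ => (0:ℝ) := by
      funext v; simp [hDone]
    rw [this, ciSup_const]; simp
  have hψC : ∀ v, ‖ψ v‖ ≤ C := by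
    intro v
    have := hC _ hone_lip v
    rw [hone_norm] at this; simpa using this
  have hC0 : 0 ≤ C := le_trans (norm_nonneg _) (hψC t.o)
  -- facts about the nested sup
  have hg : ∀ w v, (⨆ _ : φ v = w, ‖ψ v‖) = if φ v = w then ‖ψ v‖ else 0 :=
    fun w v => real_iSup_prop _ _
  have hg0 : ∀ w v, 0 ≤ (⨆ _ : φ v = w, ‖ψ v‖) := by
    intro w v; rw [hg]; split_ifs; exacts [norm_nonneg _, le_refl 0]
  have hgC : ∀ w v, (⨆ _ : φ v = w, ‖ψ v‖) ≤ C := by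
    intro w v; rw [hg]; split_ifs; exacts [hψC v, hC0]
  have hbddg : ∀ w, BddAbove (Set.range fun v => ⨆ _ : φ v = w, ‖ψ v‖) := by
    intro w; refine ⟨C, ?_⟩; rintro x ⟨v, rfl⟩; exact hgC w v
  set Sw : T → ℝ := fun w => ⨆ v, ⨆ _ : φ v = w, ‖ψ v‖ with hSw_def
  have hle_Sw : ∀ w v, φ v = w → ‖ψ v‖ ≤ Sw w := by
    intro w v h
    have h2 := le_ciSup (hbddg w) v
    rw [hg, if_pos h] at h2
    exact h2
  have hSw0 : ∀ w, 0 ≤ Sw w := by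
    intro w; obtain ⟨v, hv⟩ := hφ w
    exact (norm_nonneg _).trans (hle_Sw w v hv)
  set M : ℝ := ⨅ w, Sw w with hM_def
  have hM0 : 0 ≤ M := le_ciInf hSw0
  have hMle : ∀ w, M ≤ Sw w := by
    intro w
    exact ciInf_le ⟨0, by rintro x ⟨w', rfl⟩; exact hSw0 w'⟩ w
  -- facts about the set S
  set S : Set ℝ := {x : ℝ | ∃ f : T → ℂ, InLip t f ∧ lipNorm t f = 1 ∧
      x = ⨆ v, ‖ψ v * f (φ v)‖} with hS_def
  have hbddT : ∀ f : T → ℂ, InLip t f →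
      BddAbove (Set.range fun v => ‖ψ v * f (φ v)‖) := by
    intro f hf; refine ⟨C * lipNorm t f, ?_⟩; rintro x ⟨v, rfl⟩; exact hC f hf v
  have hSnonneg : ∀ x ∈ S, (0:ℝ) ≤ x := by
    rintro x ⟨f, hf, h1, rfl⟩
    exact (norm_nonneg _).trans (le_ciSup (hbddT f hf) t.o)
  have hSbdd : BddBelow S := ⟨0, fun x hx => hSnonneg x hx⟩
  have hSne : S.Nonempty := ⟨_, _, hone_lip, hone_norm, rfl⟩
  constructor
  · -- lower bound M/3 ≤ sInf S
    refine le_csInf hSne ?_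
    rintro x ⟨f, hf, h1, rfl⟩
    set x := ⨆ v, ‖ψ v * f (φ v)‖ with hx_def
    have hxv : ∀ v, ‖ψ v * f (φ v)‖ ≤ x := fun v => le_ciSup (hbddT f hf) v
    have hx0 : 0 ≤ x := (norm_nonneg _).trans (hxv t.o)
    have key : ∀ c : ℝ, 0 < c → c < 1/3 → ∃ u, c < ‖f u‖ := by
      intro c hc hc3
      by_cases hfo : c < ‖f t.o‖
      · exact ⟨t.o, hfo⟩
      push_neg at hfo
      have hs : 2 * c < ⨆ v, ‖Dop t f v‖ := by
        unfold lipNorm at h1; linarith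
      obtain ⟨v, hv⟩ := exists_lt_of_lt_ciSup hs
      have hvo : v ≠ t.o := by
        rintro rfl
        rw [Dop, if_pos rfl] at hv
        simp at hv; linarith
      rw [Dop, if_neg hvo] at hv
      by_contra hcon
      push_neg at hcon
      have h3 := norm_sub_le (f v) (f (t.parent v))
      have h4 := hcon v
      have h5 := hcon (t.parent v)
      linarith
    have hcM : ∀ c : ℝ, 0 < c → c < 1/3 → c * M ≤ x := by
      intro c hc hc3
      obtain ⟨u, hu⟩ := key c hc hc3
      have hSu : Sw u ≤ x / c := by
        refine ciSup_le ?_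
        intro v
        rw [hg]
        split_ifs with h
        · rw [le_div_iff₀ hc]
          calc ‖ψ v‖ * c ≤ ‖ψ v‖ * ‖f u‖ :=
                mul_le_mul_of_nonneg_left hu.le (norm_nonneg _)
            _ = ‖ψ v * f (φ v)‖ := by rw [h, norm_mul]
            _ ≤ x := hxv v
        · positivity
      have h6 : M ≤ x / c := (hMle u).trans hSu
      rw [le_div_iff₀ hc] at h6
      linarith
    by_contra hcon
    push_neg at hcon
    have hMpos : 0 < M := by
      by_contra h; push_neg at h; have := hM0; nlinarith
    have hxM : x / M < 1/3 := by
      rw [div_lt_iff₀ hMpos]; linarith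
    have hx0' : 0 ≤ x / M := div_nonneg hx0 hMpos.le
    have hc : 0 < (x / M + 1/3) / 2 := by linarith
    have hc3 : (x / M + 1/3) / 2 < 1/3 := by linarith
    have h7 := hcM _ hc hc3
    have h8 : (x / M + 1/3) / 2 * M = (x + M / 3) / 2 := by
      field_simp
    rw [h8] at h7
    linarith
  · -- upper bound sInf S ≤ M
    refine le_ciInf ?_
    intro w
    set c : ℂ := if w = t.o then 2⁻¹ else 1 with hc_def
    set fw : T → ℂ := fun v => c * (if v = w then 1 else 0) with hfw_def
    have hcn : ‖c‖ ≤ 1 := by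
      rw [hc_def]; split_ifs <;> norm_num
    have hDb : ∀ v, ‖Dop t fw v‖ ≤ ‖c‖ := by
      intro v
      rw [Dop]
      split_ifs with h
      · simp [norm_nonneg]
      · rw [hfw_def]
        simp only
        by_cases h1 : v = w <;> by_cases h2 : t.parent v = w
        · rw [if_pos h1, if_pos h2]; simp [norm_nonneg]
        · rw [if_pos h1, if_neg h2]; simp
        · rw [if_neg h1, if_pos h2]; simp
        · rw [if_neg h1, if_neg h2]; simp [norm_nonneg]
    have hfw_lip : InLip t fw := by
      refine ⟨‖c‖, ?_⟩; rintro x ⟨v, rfl⟩; exact hDb v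
    have hbddD : BddAbove (Set.range fun v => ‖Dop t fw v‖) := hfw_lip
    have hfw_norm : lipNorm t fw = 1 := by
      unfold lipNorm
      by_cases hw : w = t.o
      · -- f(o) = 1/2, sup |Df| = 1/2
        subst hw
        have hcv : ‖c‖ = 1/2 := by rw [hc_def]; simp
        have hfo : ‖fw t.o‖ = 1/2 := by
          rw [hfw_def]; simp [hc_def]
        obtain ⟨u, hu_ne, hu_par⟩ := t.no_terminal t.o
        have hDu : ‖Dop t fw u‖ = 1/2 := by
          rw [Dop, if_neg hu_ne, hfw_def]
          simp only
          rw [hu_par]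
          simp [hu_ne, hc_def]
        have hsup : (⨆ v, ‖Dop t fw v‖) = 1/2 := by
          refine le_antisymm (ciSup_le fun v => ?_) ?_
          · exact le_of_le_of_eq (hDb v) hcv
          · rw [← hDu]; exact le_ciSup hbddD u
        rw [hfo, hsup]; norm_num
      · -- f(o) = 0, sup |Df| = 1
        have hfo : ‖fw t.o‖ = 0 := by
          rw [hfw_def]; simp [Ne.symm hw]
        have hpw : t.parent w ≠ w := by
          intro h
          have := t.len_parent w hw
          rw [h] at this
          omega
        have hcw : c = 1 := by rw [hc_def, if_neg hw]
        have hDw : ‖Dop t fw w‖ = 1 := by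
          rw [Dop, if_neg hw, hfw_def]
          simp only
          rw [hcw]
          simp [hpw]
        have hsup : (⨆ v, ‖Dop t fw v‖) = 1 := by
          refine le_antisymm (ciSup_le fun v => ?_) ?_
          · have := hDb v; rw [hcw] at this; simpa using this
          · rw [← hDw]; exact le_ciSup hbddD w
        rw [hfo, hsup]; norm_num
    have hxw : (⨆ v, ‖ψ v * fw (φ v)‖) ≤ Sw w := by
      refine ciSup_le fun v => ?_
      by_cases h : φ v = w
      · calc ‖ψ v * fw (φ v)‖ = ‖ψ v‖ * ‖fw w‖ := by rw [h, norm_mul]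
          _ ≤ ‖ψ v‖ * 1 := by
              refine mul_le_mul_of_nonneg_left ?_ (norm_nonneg _)
              rw [hfw_def]; simpa using hcn
          _ = ‖ψ v‖ := mul_one _
          _ ≤ Sw w := hle_Sw w v h
      · have : fw (φ v) = 0 := by rw [hfw_def]; simp [h]
        rw [this, mul_zero, norm_zero]
        exact hSw0 w
    exact le_trans (csInf_le hSbdd ⟨fw, hfw_lip, hfw_norm, rfl⟩) hxw
end

section
/- Let T be an infinite rooted tree without terminal vertices, ψ : T → ℂ bounded with inf_{v∈T}|ψ(v)| > 0, and φ : T → T injective, with ψC_φ bounded from 𝓛 to L^∞. Then the surjectivity modulus of ψC_φ : 𝓛 → L^∞ satisfies k(ψC_φ) ≥ (1/3)·inf_{v∈T}|ψ(v)|; in particular ψC_φ is surjective onto L^∞. -/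
open scoped Classical

/-- for `ψ` bounded with `inf_v |ψ(v)| > 0`, `φ` injective and
`ψC_φ : 𝓛 → L^∞` bounded, the surjectivity modulus of `ψC_φ : 𝓛 → L^∞` is at least
`(1/3)·inf_v |ψ(v)|`; in particular `ψC_φ` maps `𝓛` onto `L^∞`. -/
theorem stmt17 {T : Type*} (t : InfRootedTree T) (ψ : T → ℂ)
    (hψ : BddAbove (Set.range fun v => ‖ψ v‖)) (hpos : 0 < ⨅ v, ‖ψ v‖)
    (φ : T → T) (hφ : Function.Injective φ)
    (hb : ∃ C : ℝ, ∀ f : T → ℂ, InLip t f → ∀ v, ‖ψ v * f (φ v)‖ ≤ C * lipNorm t f) :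
    (⨅ v, ‖ψ v‖) / 3 ≤ sSup {r : ℝ | 0 ≤ r ∧ ∀ g : T → ℂ,
        BddAbove (Set.range fun v => ‖g v‖) → (⨆ v, ‖g v‖) ≤ r →
        ∃ f : T → ℂ, InLip t f ∧ lipNorm t f ≤ 1 ∧ ∀ v, ψ v * f (φ v) = g v} ∧
      ∀ g : T → ℂ, BddAbove (Set.range fun v => ‖g v‖) →
        ∃ f : T → ℂ, InLip t f ∧ ∀ v, ψ v * f (φ v) = g v := by
  have hne : Nonempty T := ⟨t.o⟩
  set ε := ⨅ v, ‖ψ v‖ with hεdef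
  have hbb : BddBelow (Set.range fun v => ‖ψ v‖) :=
    ⟨0, by rintro x ⟨v, rfl⟩; positivity⟩
  have hεle : ∀ v, ε ≤ ‖ψ v‖ := fun v => ciInf_le hbb v
  have hψne : ∀ v, ψ v ≠ 0 := by
    intro v h
    have h1 := hεle v
    rw [h, norm_zero] at h1
    linarith
  -- main construction
  have main : ∀ g : T → ℂ, BddAbove (Set.range fun v => ‖g v‖) →
      ∃ f : T → ℂ, InLip t f ∧ lipNorm t f ≤ 3 * (⨆ v, ‖g v‖) / ε ∧
        ∀ v, ψ v * f (φ v) = g v := by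
    intro g hg
    set M := ⨆ v, ‖g v‖ with hM
    have hgle : ∀ v, ‖g v‖ ≤ M := fun v => le_ciSup hg v
    have hM0 : 0 ≤ M := le_trans (norm_nonneg _) (hgle t.o)
    set f : T → ℂ := fun w => if h : ∃ v, φ v = w then g h.choose / ψ h.choose else 0
      with hf
    have hfb : ∀ w, ‖f w‖ ≤ M / ε := by
      intro w
      by_cases h : ∃ v, φ v = w
      · simp only [hf, dif_pos h]
        rw [norm_div]
        exact div_le_div₀ hM0 (hgle _) hpos (hεle _)
      · simp only [hf, dif_neg h, norm_zero]
        positivity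
    have hD : ∀ v, ‖Dop t f v‖ ≤ 2 * (M / ε) := by
      intro v
      unfold Dop
      by_cases h : v = t.o
      · simp [h]; positivity
      · rw [if_neg h]
        calc ‖f v - f (t.parent v)‖ ≤ ‖f v‖ + ‖f (t.parent v)‖ := norm_sub_le _ _
          _ ≤ M / ε + M / ε := add_le_add (hfb _) (hfb _)
          _ = 2 * (M / ε) := by ring
    have hInLip : InLip t f := ⟨2 * (M / ε), by rintro x ⟨v, rfl⟩; exact hD v⟩
    refine ⟨f, hInLip, ?_, ?_⟩
    · have h1 : (⨆ v, ‖Dop t f v‖) ≤ 2 * (M / ε) :=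
        Real.iSup_le hD (by positivity)
      have h2 : ‖f t.o‖ ≤ M / ε := hfb _
      have : lipNorm t f ≤ M / ε + 2 * (M / ε) := add_le_add h2 h1
      calc lipNorm t f ≤ M / ε + 2 * (M / ε) := this
        _ = 3 * M / ε := by ring
    · intro v
      have h : ∃ u, φ u = φ v := ⟨v, rfl⟩
      have hc : h.choose = v := hφ h.choose_spec
      simp only [hf, dif_pos h, hc]
      exact mul_div_cancel₀ _ (hψne v)
  constructor
  · apply le_csSup
    · -- bounded above
      obtain ⟨C, hC⟩ := hb
      refine ⟨|C|, ?_⟩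
      rintro r ⟨hr0, hr⟩
      obtain ⟨f, hfl, hfn, hfe⟩ := hr (fun _ => (r : ℂ))
        ⟨r, by rintro x ⟨v, rfl⟩; simp [abs_of_nonneg hr0]⟩
        (Real.iSup_le (fun v => by simp [abs_of_nonneg hr0]) hr0)
      have hL0 : 0 ≤ lipNorm t f :=
        add_nonneg (norm_nonneg _) (Real.iSup_nonneg fun v => norm_nonneg _)
      have : r = ‖ψ t.o * f (φ t.o)‖ := by
        rw [hfe t.o]; simp [abs_of_nonneg hr0]
      calc r = ‖ψ t.o * f (φ t.o)‖ := this
        _ ≤ C * lipNorm t f := hC f hfl t.o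
        _ ≤ |C| * lipNorm t f := mul_le_mul_of_nonneg_right (le_abs_self C) hL0
        _ ≤ |C| * 1 := mul_le_mul_of_nonneg_left hfn (abs_nonneg C)
        _ = |C| := mul_one _
    · -- membership
      refine ⟨by positivity, ?_⟩
      intro g hg hgle
      obtain ⟨f, hfl, hfn, hfe⟩ := main g hg
      refine ⟨f, hfl, ?_, hfe⟩
      refine le_trans hfn ?_
      rw [div_le_one hpos]
      linarith
  · intro g hg
    obtain ⟨f, hfl, _, hfe⟩ := main g hg
    exact ⟨f, hfl, hfe⟩
end

section
/- Define φ : ℤ → ℤ by φ(n) = n for n ≥ 0, φ(n) = −n for n negative and odd, and φ(n) = n/2 for n negative and even; define ψ : ℤ → ℂ by ψ(n) = 0 for n negative and odd, and ψ(n) = 1 otherwise. Then φ is surjective, sup_{v ∈ φ⁻¹(w)} |ψ(v)| = 1 for every w ∈ ℤ, and consequently the weighted composition operator ψC_φ, (ψC_φ f)(n) = ψ(n) f(φ(n)), is an isometry on L^∞(ℤ) while ψ itself is not of constant modulus 1. -/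
/-- `φ(n) = n` for `n ≥ 0`, `φ(n) = −n` for `n` negative odd, `φ(n) = n/2` for `n`
negative even. -/
def phiZ : ℤ → ℤ := fun n => if 0 ≤ n then n else if 2 ∣ n then n / 2 else -n

/-- `ψ(n) = 0` for `n` negative odd, `ψ(n) = 1` otherwise. -/
noncomputable def psiZ19 : ℤ → ℂ := fun n => if n < 0 ∧ ¬ 2 ∣ n then 0 else 1

/-- canonical preimage -/
def gZ : ℤ → ℤ := fun w => if 0 ≤ w then w else 2 * w

lemma phi_g (w : ℤ) : phiZ (gZ w) = w := by
  unfold gZ phiZ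
  by_cases h : 0 ≤ w
  · simp [h]
  · have hw : ¬ 0 ≤ 2 * w := by omega
    simp only [h, if_false, hw, if_false]
    rw [if_pos ⟨w, rfl⟩]
    omega

lemma psi_g (w : ℤ) : psiZ19 (gZ w) = 1 := by
  unfold gZ psiZ19
  by_cases h : 0 ≤ w
  · simp [h]
  · simp [h]

lemma psi_norm_le (n : ℤ) : ‖psiZ19 n‖ ≤ 1 := by
  unfold psiZ19
  split <;> simp

/-- `φ` is surjective, `sup_{v ∈ φ⁻¹(w)} |ψ(v)| = 1` for every `w`, hence
`ψC_φ` is an isometry on `L^∞(ℤ)`, while `ψ` is not of constant modulus `1`. -/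
theorem stmt19 :
    Function.Surjective phiZ ∧
    (∀ w : ℤ, (⨆ v ∈ phiZ ⁻¹' {w}, ‖psiZ19 v‖) = 1) ∧
    (∀ f : ℤ → ℂ, BddAbove (Set.range fun n => ‖f n‖) →
      (⨆ n, ‖psiZ19 n * f (phiZ n)‖) = ⨆ n, ‖f n‖) ∧
    ¬ ∀ n : ℤ, ‖psiZ19 n‖ = 1 := by
  refine ⟨fun w => ⟨gZ w, phi_g w⟩, fun w => ?_, fun f hbdd => ?_, fun h => ?_⟩
  · -- biSup = 1
    have hbd : BddAbove (Set.range fun v => ⨆ _ : v ∈ phiZ ⁻¹' {w}, ‖psiZ19 v‖) := by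
      refine ⟨1, ?_⟩
      rintro x ⟨v, rfl⟩
      exact Real.iSup_le (fun _ => psi_norm_le v) one_pos.le
    apply le_antisymm
    · exact Real.iSup_le (fun v => Real.iSup_le (fun _ => psi_norm_le v) one_pos.le)
        one_pos.le
    · have hmem : gZ w ∈ phiZ ⁻¹' {w} := by simp [phi_g w]
      have : (⨆ _ : gZ w ∈ phiZ ⁻¹' {w}, ‖psiZ19 (gZ w)‖) = ‖psiZ19 (gZ w)‖ :=
        ciSup_pos hmem
      calc (1 : ℝ) = ⨆ _ : gZ w ∈ phiZ ⁻¹' {w}, ‖psiZ19 (gZ w)‖ := by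
            rw [this, psi_g]; simp
        _ ≤ _ := le_ciSup hbd (gZ w)
  · -- isometry
    have hterm : ∀ n, ‖psiZ19 n * f (phiZ n)‖ ≤ ⨆ m, ‖f m‖ := by
      intro n
      rw [norm_mul]
      calc ‖psiZ19 n‖ * ‖f (phiZ n)‖ ≤ 1 * ‖f (phiZ n)‖ :=
            mul_le_mul_of_nonneg_right (psi_norm_le n) (norm_nonneg _)
        _ = ‖f (phiZ n)‖ := one_mul _
        _ ≤ ⨆ m, ‖f m‖ := le_ciSup hbdd (phiZ n)
    have hbd2 : BddAbove (Set.range fun n => ‖psiZ19 n * f (phiZ n)‖) := by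
      refine ⟨⨆ m, ‖f m‖, ?_⟩
      rintro x ⟨n, rfl⟩
      exact hterm n
    apply le_antisymm
    · exact ciSup_le hterm
    · refine ciSup_le fun m => ?_
      have : ‖f m‖ = ‖psiZ19 (gZ m) * f (phiZ (gZ m))‖ := by
        rw [psi_g, phi_g, one_mul]
      rw [this]
      exact le_ciSup hbd2 (gZ m)
  · have := h (-1)
    unfold psiZ19 at this
    rw [if_pos ⟨by norm_num, by decide⟩] at this
    simp at this
end
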